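/- arXiv:2405.07366 — 15 statements merged into one kernel-verified Lean document; each statement's English description precedes it below -/
import Mathlib

section
/- Let L be a lattice and let (x_γ)_{γ∈Γ} be a net in L. If (x_γ) uO-converges to x and there exist u ∈ L and γ₀ ∈ Γ such that x_γ ≤ u for all γ ≥ γ₀, then x ≤ u. Dually, if (x_γ) uO-converges to x and eventually u ≤ x_γ, then u ≤ x. -/
universe u v w

section Defs

variable {L : Type u} [Lattice L]

/-- O-convergence of a net indexed by a preordered (directed) index type. -/
def OConv {Γ : Type v} [Preorder Γ] (f : Γ → L) (x : L) : Prop :=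
  ∃ M N : Set L, M.Nonempty ∧ DirectedOn (· ≤ ·) M ∧ N.Nonempty ∧ DirectedOn (· ≥ ·) N ∧
    IsLUB M x ∧ IsGLB N x ∧
    ∀ m ∈ M, ∀ n ∈ N, ∃ γ₀ : Γ, ∀ γ : Γ, γ₀ ≤ γ → f γ ∈ Set.Icc m n

/-- unbounded order convergence of a net -/
def UOConv {Γ : Type v} [Preorder Γ] (f : Γ → L) (x : L) : Prop :=
  ∀ s t : L, s ≤ t → OConv (fun γ => (f γ ⊓ t) ⊔ s) ((x ⊓ t) ⊔ s)

/-- infinitely distributive lattice -/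
def InfDistrib (L : Type u) [Lattice L] : Prop :=
  (∀ (x : L) (S : Set L) (a : L), IsGLB S a → IsGLB ((fun s => x ⊔ s) '' S) (x ⊔ a)) ∧
  (∀ (x : L) (S : Set L) (a : L), IsLUB S a → IsLUB ((fun s => x ⊓ s) '' S) (x ⊓ a))

/-- sublattice (as a set) -/
def IsSubl (Y : Set L) : Prop :=
  ∀ a ∈ Y, ∀ b ∈ Y, a ⊔ b ∈ Y ∧ a ⊓ b ∈ Y

/-- 1-O-adherence -/
def OAdh1 (X : Set L) : Set L :=
  {x | ∃ (Γ : Type u) (_ : Preorder Γ), IsDirected Γ (· ≤ ·) ∧ Nonempty Γ ∧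
      ∃ f : Γ → L, (∀ γ, f γ ∈ X) ∧ OConv f x}

/-- 1-uO-adherence -/
def UOAdh1 (X : Set L) : Set L :=
  {x | ∃ (Γ : Type u) (_ : Preorder Γ), IsDirected Γ (· ≤ ·) ∧ Nonempty Γ ∧
      ∃ f : Γ → L, (∀ γ, f γ ∈ X) ∧ UOConv f x}

def OClosedSet (X : Set L) : Prop := OAdh1 X = X
def UOClosedSet (X : Set L) : Prop := UOAdh1 X = X

end Defs

theorem oconv_le {L : Type u} [Lattice L] {Γ : Type v} [Preorder Γ]
    [IsDirected Γ (· ≤ ·)] (g : Γ → L) (y v : L) (h : OConv g y) (γ₀ : Γ)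
    (hb : ∀ γ, γ₀ ≤ γ → g γ ≤ v) : y ≤ v := by
  obtain ⟨M, N, hMne, _, ⟨n, hn⟩, _, hM, _, hev⟩ := h
  refine hM.2 fun m hm => ?_
  obtain ⟨γ₁, hγ₁⟩ := hev m hm n hn
  obtain ⟨γ, hγ0, hγ1⟩ := directed_of (· ≤ ·) γ₀ γ₁
  exact le_trans (hγ₁ γ hγ1).1 (hb γ hγ0)

theorem le_oconv {L : Type u} [Lattice L] {Γ : Type v} [Preorder Γ]
    [IsDirected Γ (· ≤ ·)] (g : Γ → L) (y v : L) (h : OConv g y) (γ₀ : Γ)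
    (hb : ∀ γ, γ₀ ≤ γ → v ≤ g γ) : v ≤ y := by
  obtain ⟨M, N, ⟨m, hm⟩, _, _, _, _, hN, hev⟩ := h
  refine hN.2 fun n hn => ?_
  obtain ⟨γ₁, hγ₁⟩ := hev m hm n hn
  obtain ⟨γ, hγ0, hγ1⟩ := directed_of (· ≤ ·) γ₀ γ₁
  exact le_trans (hb γ hγ0) (hγ₁ γ hγ1).2

/-- If a net uO-converges to `x` and is eventually bounded above by `u`, then `x ≤ u`;
dually, if it is eventually bounded below by `u`, then `u ≤ x`. -/
theorem stmt0 {L : Type u} [Lattice L] {Γ : Type v} [Preorder Γ]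
    [IsDirected Γ (· ≤ ·)] [Nonempty Γ] (f : Γ → L) (x : L) (h : UOConv f x) :
    (∀ (u : L) (γ₀ : Γ), (∀ γ, γ₀ ≤ γ → f γ ≤ u) → x ≤ u) ∧
    (∀ (u : L) (γ₀ : Γ), (∀ γ, γ₀ ≤ γ → u ≤ f γ) → u ≤ x) := by
  constructor
  · intro u γ₀ hb
    have hc := h u (x ⊔ u) le_sup_right
    have hle : (x ⊓ (x ⊔ u)) ⊔ u ≤ u :=
      oconv_le _ _ u hc γ₀ fun γ hγ =>
        sup_le (inf_le_left.trans (hb γ hγ)) le_rfl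
    calc x ≤ (x ⊓ (x ⊔ u)) ⊔ u := by simp
      _ ≤ u := hle
  · intro u γ₀ hb
    have hc := h (u ⊓ x) u inf_le_left
    have hge : u ≤ (x ⊓ u) ⊔ (u ⊓ x) :=
      le_oconv _ _ u hc γ₀ fun γ hγ =>
        le_sup_of_le_left (le_inf (hb γ hγ) le_rfl)
    calc u ≤ (x ⊓ u) ⊔ (u ⊓ x) := hge
      _ ≤ x := sup_le inf_le_left inf_le_right
end

section
/- Let L be a lattice and let (x_γ)_{γ∈Γ} be a monotone net in L that uO-converges to x. If (x_γ) is increasing, then x is the supremum of {x_γ : γ ∈ Γ}; if (x_γ) is decreasing, then x is the infimum of {x_γ : γ ∈ Γ}. -/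
universe u v w

/-- A monotone net that uO-converges has its uO-limit as supremum (if increasing)
or infimum (if decreasing) of its range. -/
theorem stmt1 {L : Type u} [Lattice L] {Γ : Type v} [Preorder Γ]
    [IsDirected Γ (· ≤ ·)] [Nonempty Γ] (f : Γ → L) (x : L) (h : UOConv f x) :
    (Monotone f → IsLUB (Set.range f) x) ∧ (Antitone f → IsGLB (Set.range f) x) := by
  constructor
  · intro hmono
    constructor
    · rintro _ ⟨γ, rfl⟩
      obtain ⟨M, N, hMne, -, -, -, hM, hN, hev⟩ :=
        h (x ⊓ f γ) (x ⊔ f γ) (le_trans inf_le_left le_sup_left)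
      have hx : (x ⊓ (x ⊔ f γ)) ⊔ (x ⊓ f γ) = x := by
        rw [inf_sup_self, sup_inf_self]
      rw [hx] at hM hN
      refine hN.2 ?_
      intro n hn
      obtain ⟨m, hm⟩ := hMne
      obtain ⟨γ₀, hγ₀⟩ := hev m hm n hn
      obtain ⟨δ, hδ1, hδ2⟩ := directed_of (· ≤ ·) γ γ₀
      calc f γ = f γ ⊓ (x ⊔ f γ) := (inf_eq_left.2 le_sup_right).symm
        _ ≤ f δ ⊓ (x ⊔ f γ) := inf_le_inf_right _ (hmono hδ1)
        _ ≤ (f δ ⊓ (x ⊔ f γ)) ⊔ (x ⊓ f γ) := le_sup_left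
        _ ≤ n := (hγ₀ δ hδ2).2
    · intro u hu
      obtain ⟨M, N, -, -, hNne, -, hM, hN, hev⟩ :=
        h (x ⊓ u) (x ⊔ u) (le_trans inf_le_left le_sup_left)
      have hx : (x ⊓ (x ⊔ u)) ⊔ (x ⊓ u) = x := by
        rw [inf_sup_self, sup_inf_self]
      rw [hx] at hM hN
      refine hM.2 ?_
      intro m hm
      obtain ⟨n, hn⟩ := hNne
      obtain ⟨γ₀, hγ₀⟩ := hev m hm n hn
      calc m ≤ (f γ₀ ⊓ (x ⊔ u)) ⊔ (x ⊓ u) := (hγ₀ γ₀ le_rfl).1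
        _ ≤ u := sup_le (le_trans inf_le_left (hu ⟨γ₀, rfl⟩)) inf_le_right
  · intro hanti
    constructor
    · rintro _ ⟨γ, rfl⟩
      obtain ⟨M, N, -, -, hNne, -, hM, hN, hev⟩ :=
        h (x ⊓ f γ) (x ⊔ f γ) (le_trans inf_le_left le_sup_left)
      have hx : (x ⊓ (x ⊔ f γ)) ⊔ (x ⊓ f γ) = x := by
        rw [inf_sup_self, sup_inf_self]
      rw [hx] at hM hN
      refine hM.2 ?_
      intro m hm
      obtain ⟨n, hn⟩ := hNne
      obtain ⟨γ₀, hγ₀⟩ := hev m hm n hn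
      obtain ⟨δ, hδ1, hδ2⟩ := directed_of (· ≤ ·) γ γ₀
      calc m ≤ (f δ ⊓ (x ⊔ f γ)) ⊔ (x ⊓ f γ) := (hγ₀ δ hδ2).1
        _ ≤ f γ := sup_le (le_trans inf_le_left (hanti hδ1)) inf_le_right
    · intro u hu
      obtain ⟨M, N, hMne, -, -, -, hM, hN, hev⟩ :=
        h (x ⊓ u) (x ⊔ u) (le_trans inf_le_left le_sup_left)
      have hx : (x ⊓ (x ⊔ u)) ⊔ (x ⊓ u) = x := by
        rw [inf_sup_self, sup_inf_self]
      rw [hx] at hM hN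
      refine hN.2 ?_
      intro n hn
      obtain ⟨m, hm⟩ := hMne
      obtain ⟨γ₀, hγ₀⟩ := hev m hm n hn
      calc u = u ⊓ (x ⊔ u) := (inf_eq_left.2 le_sup_right).symm
        _ ≤ f γ₀ ⊓ (x ⊔ u) := inf_le_inf_right _ (hu ⟨γ₀, rfl⟩)
        _ ≤ (f γ₀ ⊓ (x ⊔ u)) ⊔ (x ⊓ u) := le_sup_left
        _ ≤ n := (hγ₀ γ₀ le_rfl).2
end

section
/- Let L be an infinitely distributive lattice. If the net (x_γ)_{γ∈Γ} O-converges to x and the net (y_ω)_{ω∈Ω} O-converges to y, then the net (x_γ ∨ y_ω) indexed by the product directed set Γ × Ω O-converges to x ∨ y, and the net (x_γ ∧ y_ω) indexed by Γ × Ω O-converges to x ∧ y. -/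
universe u v w

section Aux

variable {L : Type u} [Lattice L]

lemma aux_glb_sup (hL : ∀ (x : L) (S : Set L) (a : L), IsGLB S a →
      IsGLB ((fun s => x ⊔ s) '' S) (x ⊔ a))
    {N₁ N₂ : Set L} {x y : L} (h1 : IsGLB N₁ x) (h2 : IsGLB N₂ y) :
    IsGLB (Set.image2 (· ⊔ ·) N₁ N₂) (x ⊔ y) := by
  constructor
  · rintro _ ⟨n₁, h₁, n₂, hn₂, rfl⟩
    exact sup_le_sup (h1.1 h₁) (h2.1 hn₂)
  · intro b hb
    have hb1 : ∀ n₁ ∈ N₁, b ≤ n₁ ⊔ y := by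
      intro n₁ hn₁
      apply (hL n₁ N₂ y h2).2
      rintro _ ⟨n₂, hn₂, rfl⟩
      exact hb (Set.mem_image2_of_mem hn₁ hn₂)
    have : b ≤ y ⊔ x := by
      apply (hL y N₁ x h1).2
      rintro _ ⟨n₁, hn₁, rfl⟩
      simpa [sup_comm] using hb1 n₁ hn₁
    rwa [sup_comm] at this

lemma aux_lub_inf (hL : ∀ (x : L) (S : Set L) (a : L), IsLUB S a →
      IsLUB ((fun s => x ⊓ s) '' S) (x ⊓ a))
    {M₁ M₂ : Set L} {x y : L} (h1 : IsLUB M₁ x) (h2 : IsLUB M₂ y) :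
    IsLUB (Set.image2 (· ⊓ ·) M₁ M₂) (x ⊓ y) := by
  constructor
  · rintro _ ⟨m₁, hm₁, m₂, hm₂, rfl⟩
    exact inf_le_inf (h1.1 hm₁) (h2.1 hm₂)
  · intro b hb
    have hb1 : ∀ m₁ ∈ M₁, m₁ ⊓ y ≤ b := by
      intro m₁ hm₁
      apply (hL m₁ M₂ y h2).2
      rintro _ ⟨m₂, hm₂, rfl⟩
      exact hb (Set.mem_image2_of_mem hm₁ hm₂)
    have : y ⊓ x ≤ b := by
      apply (hL y M₁ x h1).2
      rintro _ ⟨m₁, hm₁, rfl⟩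
      simpa [inf_comm] using hb1 m₁ hm₁
    rwa [inf_comm] at this

lemma aux_lub_sup {M₁ M₂ : Set L} {x y : L} (hne : M₂.Nonempty) (hne1 : M₁.Nonempty)
    (h1 : IsLUB M₁ x) (h2 : IsLUB M₂ y) :
    IsLUB (Set.image2 (· ⊔ ·) M₁ M₂) (x ⊔ y) := by
  constructor
  · rintro _ ⟨m₁, hm₁, m₂, hm₂, rfl⟩
    exact sup_le_sup (h1.1 hm₁) (h2.1 hm₂)
  · intro b hb
    obtain ⟨m₂, hm₂⟩ := hne
    obtain ⟨m₁, hm₁⟩ := hne1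
    have hx : x ≤ b := h1.2 fun m hm =>
      le_trans le_sup_left (hb (Set.mem_image2_of_mem hm hm₂))
    have hy : y ≤ b := h2.2 fun m hm =>
      le_trans le_sup_right (hb (Set.mem_image2_of_mem hm₁ hm))
    exact sup_le hx hy

lemma aux_glb_inf {N₁ N₂ : Set L} {x y : L} (hne : N₂.Nonempty) (hne1 : N₁.Nonempty)
    (h1 : IsGLB N₁ x) (h2 : IsGLB N₂ y) :
    IsGLB (Set.image2 (· ⊓ ·) N₁ N₂) (x ⊓ y) := by
  constructor
  · rintro _ ⟨n₁, hn₁, n₂, hn₂, rfl⟩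
    exact inf_le_inf (h1.1 hn₁) (h2.1 hn₂)
  · intro b hb
    obtain ⟨n₂, hn₂⟩ := hne
    obtain ⟨n₁, hn₁⟩ := hne1
    have hx : b ≤ x := h1.2 fun n hn =>
      le_trans (hb (Set.mem_image2_of_mem hn hn₂)) inf_le_left
    have hy : b ≤ y := h2.2 fun n hn =>
      le_trans (hb (Set.mem_image2_of_mem hn₁ hn)) inf_le_right
    exact le_inf hx hy

lemma dir_image2_sup_le {M₁ M₂ : Set L} (h1 : DirectedOn (· ≤ ·) M₁)
    (h2 : DirectedOn (· ≤ ·) M₂) : DirectedOn (· ≤ ·) (Set.image2 (· ⊔ ·) M₁ M₂) := by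
  rintro _ ⟨a₁, ha₁, a₂, ha₂, rfl⟩ _ ⟨b₁, hb₁, b₂, hb₂, rfl⟩
  obtain ⟨c₁, hc₁, hac₁, hbc₁⟩ := h1 a₁ ha₁ b₁ hb₁
  obtain ⟨c₂, hc₂, hac₂, hbc₂⟩ := h2 a₂ ha₂ b₂ hb₂
  exact ⟨c₁ ⊔ c₂, Set.mem_image2_of_mem hc₁ hc₂,
    sup_le_sup hac₁ hac₂, sup_le_sup hbc₁ hbc₂⟩

lemma dir_image2_sup_ge {M₁ M₂ : Set L} (h1 : DirectedOn (· ≥ ·) M₁)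
    (h2 : DirectedOn (· ≥ ·) M₂) : DirectedOn (· ≥ ·) (Set.image2 (· ⊔ ·) M₁ M₂) := by
  rintro _ ⟨a₁, ha₁, a₂, ha₂, rfl⟩ _ ⟨b₁, hb₁, b₂, hb₂, rfl⟩
  obtain ⟨c₁, hc₁, hac₁, hbc₁⟩ := h1 a₁ ha₁ b₁ hb₁
  obtain ⟨c₂, hc₂, hac₂, hbc₂⟩ := h2 a₂ ha₂ b₂ hb₂
  exact ⟨c₁ ⊔ c₂, Set.mem_image2_of_mem hc₁ hc₂,
    sup_le_sup hac₁ hac₂, sup_le_sup hbc₁ hbc₂⟩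

lemma dir_image2_inf_le {M₁ M₂ : Set L} (h1 : DirectedOn (· ≤ ·) M₁)
    (h2 : DirectedOn (· ≤ ·) M₂) : DirectedOn (· ≤ ·) (Set.image2 (· ⊓ ·) M₁ M₂) := by
  rintro _ ⟨a₁, ha₁, a₂, ha₂, rfl⟩ _ ⟨b₁, hb₁, b₂, hb₂, rfl⟩
  obtain ⟨c₁, hc₁, hac₁, hbc₁⟩ := h1 a₁ ha₁ b₁ hb₁
  obtain ⟨c₂, hc₂, hac₂, hbc₂⟩ := h2 a₂ ha₂ b₂ hb₂
  exact ⟨c₁ ⊓ c₂, Set.mem_image2_of_mem hc₁ hc₂,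
    inf_le_inf hac₁ hac₂, inf_le_inf hbc₁ hbc₂⟩

lemma dir_image2_inf_ge {M₁ M₂ : Set L} (h1 : DirectedOn (· ≥ ·) M₁)
    (h2 : DirectedOn (· ≥ ·) M₂) : DirectedOn (· ≥ ·) (Set.image2 (· ⊓ ·) M₁ M₂) := by
  rintro _ ⟨a₁, ha₁, a₂, ha₂, rfl⟩ _ ⟨b₁, hb₁, b₂, hb₂, rfl⟩
  obtain ⟨c₁, hc₁, hac₁, hbc₁⟩ := h1 a₁ ha₁ b₁ hb₁
  obtain ⟨c₂, hc₂, hac₂, hbc₂⟩ := h2 a₂ ha₂ b₂ hb₂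
  exact ⟨c₁ ⊓ c₂, Set.mem_image2_of_mem hc₁ hc₂,
    inf_le_inf hac₁ hac₂, inf_le_inf hbc₁ hbc₂⟩

end Aux

/-- In an infinitely distributive lattice, O-convergence is preserved by joins and
meets of nets over the product index set. -/
theorem stmt2 {L : Type u} [Lattice L] (hL : InfDistrib L)
    {Γ : Type v} {Ω : Type w} [Preorder Γ] [Preorder Ω]
    [IsDirected Γ (· ≤ ·)] [Nonempty Γ] [IsDirected Ω (· ≤ ·)] [Nonempty Ω]
    (f : Γ → L) (g : Ω → L) (x y : L) (hf : OConv f x) (hg : OConv g y) :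
    OConv (fun p : Γ × Ω => f p.1 ⊔ g p.2) (x ⊔ y) ∧
    OConv (fun p : Γ × Ω => f p.1 ⊓ g p.2) (x ⊓ y) := by
  obtain ⟨M₁, N₁, hM₁ne, hM₁d, hN₁ne, hN₁d, hM₁lub, hN₁glb, hfev⟩ := hf
  obtain ⟨M₂, N₂, hM₂ne, hM₂d, hN₂ne, hN₂d, hM₂lub, hN₂glb, hgev⟩ := hg
  constructor
  · refine ⟨Set.image2 (· ⊔ ·) M₁ M₂, Set.image2 (· ⊔ ·) N₁ N₂,
      hM₁ne.image2 hM₂ne, dir_image2_sup_le hM₁d hM₂d,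
      hN₁ne.image2 hN₂ne, dir_image2_sup_ge hN₁d hN₂d,
      aux_lub_sup hM₂ne hM₁ne hM₁lub hM₂lub,
      aux_glb_sup hL.1 hN₁glb hN₂glb, ?_⟩
    rintro _ ⟨m₁, hm₁, m₂, hm₂, rfl⟩ _ ⟨n₁, hn₁, n₂, hn₂, rfl⟩
    obtain ⟨γ₀, hγ₀⟩ := hfev m₁ hm₁ n₁ hn₁
    obtain ⟨ω₀, hω₀⟩ := hgev m₂ hm₂ n₂ hn₂
    refine ⟨(γ₀, ω₀), fun p hp => ?_⟩
    obtain ⟨h1, h2⟩ := hγ₀ p.1 hp.1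
    obtain ⟨h3, h4⟩ := hω₀ p.2 hp.2
    exact ⟨sup_le_sup h1 h3, sup_le_sup h2 h4⟩
  · refine ⟨Set.image2 (· ⊓ ·) M₁ M₂, Set.image2 (· ⊓ ·) N₁ N₂,
      hM₁ne.image2 hM₂ne, dir_image2_inf_le hM₁d hM₂d,
      hN₁ne.image2 hN₂ne, dir_image2_inf_ge hN₁d hN₂d,
      aux_lub_inf hL.2 hM₁lub hM₂lub,
      aux_glb_inf hN₂ne hN₁ne hN₁glb hN₂glb, ?_⟩
    rintro _ ⟨m₁, hm₁, m₂, hm₂, rfl⟩ _ ⟨n₁, hn₁, n₂, hn₂, rfl⟩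
    obtain ⟨γ₀, hγ₀⟩ := hfev m₁ hm₁ n₁ hn₁
    obtain ⟨ω₀, hω₀⟩ := hgev m₂ hm₂ n₂ hn₂
    refine ⟨(γ₀, ω₀), fun p hp => ?_⟩
    obtain ⟨h1, h2⟩ := hγ₀ p.1 hp.1
    obtain ⟨h3, h4⟩ := hω₀ p.2 hp.2
    exact ⟨inf_le_inf h1 h3, inf_le_inf h2 h4⟩
end

section
/- Let L be an infinitely distributive lattice. If the net (x_γ)_{γ∈Γ} uO-converges to x and the net (y_ω)_{ω∈Ω} uO-converges to y, then the net (x_γ ∨ y_ω) indexed by the product directed set Γ × Ω uO-converges to x ∨ y, and the net (x_γ ∧ y_ω) indexed by Γ × Ω uO-converges to x ∧ y. -/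
universe u v w

section Aux

variable {L : Type u} [Lattice L]

lemma aux_inf_sup_distrib (hL : InfDistrib L) (a b c : L) :
    a ⊓ (b ⊔ c) = (a ⊓ b) ⊔ (a ⊓ c) := by
  have h := hL.2 a {b, c} (b ⊔ c) isLUB_pair
  have himg : (fun s => a ⊓ s) '' {b, c} = {a ⊓ b, a ⊓ c} := by
    simp [Set.image_pair]
  rw [himg] at h
  exact h.unique isLUB_pair

lemma aux_sup_inf_distrib (hL : InfDistrib L) (a b c : L) :
    a ⊔ (b ⊓ c) = (a ⊔ b) ⊓ (a ⊔ c) := by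
  have h := hL.1 a {b, c} (b ⊓ c) isGLB_pair
  have himg : (fun s => a ⊔ s) '' {b, c} = {a ⊔ b, a ⊔ c} := by
    simp [Set.image_pair]
  rw [himg] at h
  exact h.unique isGLB_pair

lemma aux_directed_sup {M1 M2 : Set L} (h1 : DirectedOn (· ≤ ·) M1)
    (h2 : DirectedOn (· ≤ ·) M2) :
    DirectedOn (· ≤ ·) ((fun p : L × L => p.1 ⊔ p.2) '' (M1 ×ˢ M2)) := by
  rintro _ ⟨⟨a1, a2⟩, ⟨ha1, ha2⟩, rfl⟩ _ ⟨⟨b1, b2⟩, ⟨hb1, hb2⟩, rfl⟩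
  obtain ⟨c1, hc1, hac1, hbc1⟩ := h1 a1 ha1 b1 hb1
  obtain ⟨c2, hc2, hac2, hbc2⟩ := h2 a2 ha2 b2 hb2
  exact ⟨c1 ⊔ c2, ⟨⟨c1, c2⟩, ⟨hc1, hc2⟩, rfl⟩, sup_le_sup hac1 hac2, sup_le_sup hbc1 hbc2⟩

lemma aux_directed_inf {M1 M2 : Set L} (h1 : DirectedOn (· ≥ ·) M1)
    (h2 : DirectedOn (· ≥ ·) M2) :
    DirectedOn (· ≥ ·) ((fun p : L × L => p.1 ⊓ p.2) '' (M1 ×ˢ M2)) := by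
  rintro _ ⟨⟨a1, a2⟩, ⟨ha1, ha2⟩, rfl⟩ _ ⟨⟨b1, b2⟩, ⟨hb1, hb2⟩, rfl⟩
  obtain ⟨c1, hc1, hac1, hbc1⟩ := h1 a1 ha1 b1 hb1
  obtain ⟨c2, hc2, hac2, hbc2⟩ := h2 a2 ha2 b2 hb2
  exact ⟨c1 ⊓ c2, ⟨⟨c1, c2⟩, ⟨hc1, hc2⟩, rfl⟩, inf_le_inf hac1 hac2, inf_le_inf hbc1 hbc2⟩

lemma aux_directed_sup' {M1 M2 : Set L} (h1 : DirectedOn (· ≥ ·) M1)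
    (h2 : DirectedOn (· ≥ ·) M2) :
    DirectedOn (· ≥ ·) ((fun p : L × L => p.1 ⊔ p.2) '' (M1 ×ˢ M2)) := by
  rintro _ ⟨⟨a1, a2⟩, ⟨ha1, ha2⟩, rfl⟩ _ ⟨⟨b1, b2⟩, ⟨hb1, hb2⟩, rfl⟩
  obtain ⟨c1, hc1, hac1, hbc1⟩ := h1 a1 ha1 b1 hb1
  obtain ⟨c2, hc2, hac2, hbc2⟩ := h2 a2 ha2 b2 hb2
  exact ⟨c1 ⊔ c2, ⟨⟨c1, c2⟩, ⟨hc1, hc2⟩, rfl⟩, sup_le_sup hac1 hac2, sup_le_sup hbc1 hbc2⟩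

lemma aux_directed_inf' {M1 M2 : Set L} (h1 : DirectedOn (· ≤ ·) M1)
    (h2 : DirectedOn (· ≤ ·) M2) :
    DirectedOn (· ≤ ·) ((fun p : L × L => p.1 ⊓ p.2) '' (M1 ×ˢ M2)) := by
  rintro _ ⟨⟨a1, a2⟩, ⟨ha1, ha2⟩, rfl⟩ _ ⟨⟨b1, b2⟩, ⟨hb1, hb2⟩, rfl⟩
  obtain ⟨c1, hc1, hac1, hbc1⟩ := h1 a1 ha1 b1 hb1
  obtain ⟨c2, hc2, hac2, hbc2⟩ := h2 a2 ha2 b2 hb2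
  exact ⟨c1 ⊓ c2, ⟨⟨c1, c2⟩, ⟨hc1, hc2⟩, rfl⟩, inf_le_inf hac1 hac2, inf_le_inf hbc1 hbc2⟩

/-- LUB of pointwise joins: no distributivity needed, but nonemptiness. -/
lemma aux_isLUB_sup {M1 M2 : Set L} {x y : L} (hne1 : M1.Nonempty) (hne2 : M2.Nonempty)
    (h1 : IsLUB M1 x) (h2 : IsLUB M2 y) :
    IsLUB ((fun p : L × L => p.1 ⊔ p.2) '' (M1 ×ˢ M2)) (x ⊔ y) := by
  constructor
  · rintro _ ⟨⟨a1, a2⟩, ⟨ha1, ha2⟩, rfl⟩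
    exact sup_le_sup (h1.1 ha1) (h2.1 ha2)
  · intro b hb
    obtain ⟨m1, hm1⟩ := hne1
    obtain ⟨m2, hm2⟩ := hne2
    have hx : x ≤ b := h1.2 fun a ha =>
      le_trans le_sup_left (hb ⟨⟨a, m2⟩, ⟨ha, hm2⟩, rfl⟩)
    have hy : y ≤ b := h2.2 fun a ha =>
      le_trans le_sup_right (hb ⟨⟨m1, a⟩, ⟨hm1, ha⟩, rfl⟩)
    exact sup_le hx hy

/-- GLB of pointwise meets: dual, no distributivity needed. -/
lemma aux_isGLB_inf {M1 M2 : Set L} {x y : L} (hne1 : M1.Nonempty) (hne2 : M2.Nonempty)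
    (h1 : IsGLB M1 x) (h2 : IsGLB M2 y) :
    IsGLB ((fun p : L × L => p.1 ⊓ p.2) '' (M1 ×ˢ M2)) (x ⊓ y) := by
  constructor
  · rintro _ ⟨⟨a1, a2⟩, ⟨ha1, ha2⟩, rfl⟩
    exact inf_le_inf (h1.1 ha1) (h2.1 ha2)
  · intro b hb
    obtain ⟨m1, hm1⟩ := hne1
    obtain ⟨m2, hm2⟩ := hne2
    have hx : b ≤ x := h1.2 fun a ha =>
      le_trans (hb ⟨⟨a, m2⟩, ⟨ha, hm2⟩, rfl⟩) inf_le_left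
    have hy : b ≤ y := h2.2 fun a ha =>
      le_trans (hb ⟨⟨m1, a⟩, ⟨hm1, ha⟩, rfl⟩) inf_le_right
    exact le_inf hx hy

/-- GLB of pointwise joins: needs infinite distributivity. -/
lemma aux_isGLB_sup (hL : InfDistrib L) {N1 N2 : Set L} {x y : L}
    (h1 : IsGLB N1 x) (h2 : IsGLB N2 y) :
    IsGLB ((fun p : L × L => p.1 ⊔ p.2) '' (N1 ×ˢ N2)) (x ⊔ y) := by
  constructor
  · rintro _ ⟨⟨a1, a2⟩, ⟨ha1, ha2⟩, rfl⟩
    exact sup_le_sup (h1.1 ha1) (h2.1 ha2)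
  · intro b hb
    have key : ∀ n1 ∈ N1, b ≤ n1 ⊔ y := by
      intro n1 hn1
      refine (hL.1 n1 N2 y h2).2 ?_
      rintro _ ⟨n2, hn2, rfl⟩
      exact hb ⟨⟨n1, n2⟩, ⟨hn1, hn2⟩, rfl⟩
    have hb2 : b ≤ y ⊔ x := by
      refine (hL.1 y N1 x h1).2 ?_
      rintro _ ⟨n1, hn1, rfl⟩
      exact (key n1 hn1).trans (sup_comm n1 y).le
    exact hb2.trans (sup_comm y x).le

/-- LUB of pointwise meets: needs infinite distributivity. -/
lemma aux_isLUB_inf (hL : InfDistrib L) {N1 N2 : Set L} {x y : L}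
    (h1 : IsLUB N1 x) (h2 : IsLUB N2 y) :
    IsLUB ((fun p : L × L => p.1 ⊓ p.2) '' (N1 ×ˢ N2)) (x ⊓ y) := by
  constructor
  · rintro _ ⟨⟨a1, a2⟩, ⟨ha1, ha2⟩, rfl⟩
    exact inf_le_inf (h1.1 ha1) (h2.1 ha2)
  · intro b hb
    have key : ∀ n1 ∈ N1, n1 ⊓ y ≤ b := by
      intro n1 hn1
      refine (hL.2 n1 N2 y h2).2 ?_
      rintro _ ⟨n2, hn2, rfl⟩
      exact hb ⟨⟨n1, n2⟩, ⟨hn1, hn2⟩, rfl⟩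
    have hb2 : y ⊓ x ≤ b := by
      refine (hL.2 y N1 x h1).2 ?_
      rintro _ ⟨n1, hn1, rfl⟩
      exact (inf_comm y n1).le.trans (key n1 hn1)
    exact (inf_comm x y).le.trans hb2

lemma OConv.sup' (hL : InfDistrib L) {Γ : Type v} {Ω : Type w} [Preorder Γ] [Preorder Ω]
    {f : Γ → L} {g : Ω → L} {x y : L} (hf : OConv f x) (hg : OConv g y) :
    OConv (fun p : Γ × Ω => f p.1 ⊔ g p.2) (x ⊔ y) := by
  obtain ⟨M1, N1, hM1ne, hM1d, hN1ne, hN1d, hM1l, hN1g, h1⟩ := hf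
  obtain ⟨M2, N2, hM2ne, hM2d, hN2ne, hN2d, hM2l, hN2g, h2⟩ := hg
  refine ⟨(fun p : L × L => p.1 ⊔ p.2) '' (M1 ×ˢ M2),
    (fun p : L × L => p.1 ⊔ p.2) '' (N1 ×ˢ N2),
    (hM1ne.prod hM2ne).image _, aux_directed_sup hM1d hM2d,
    (hN1ne.prod hN2ne).image _, aux_directed_sup' hN1d hN2d,
    aux_isLUB_sup hM1ne hM2ne hM1l hM2l, aux_isGLB_sup hL hN1g hN2g, ?_⟩
  rintro _ ⟨⟨m1, m2⟩, ⟨hm1, hm2⟩, rfl⟩ _ ⟨⟨n1, n2⟩, ⟨hn1, hn2⟩, rfl⟩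
  obtain ⟨γ₀, hγ₀⟩ := h1 m1 hm1 n1 hn1
  obtain ⟨ω₀, hω₀⟩ := h2 m2 hm2 n2 hn2
  refine ⟨⟨γ₀, ω₀⟩, ?_⟩
  rintro ⟨γ, ω⟩ ⟨hγ, hω⟩
  obtain ⟨hl1, hr1⟩ := hγ₀ γ hγ
  obtain ⟨hl2, hr2⟩ := hω₀ ω hω
  exact ⟨sup_le_sup hl1 hl2, sup_le_sup hr1 hr2⟩

lemma OConv.inf' (hL : InfDistrib L) {Γ : Type v} {Ω : Type w} [Preorder Γ] [Preorder Ω]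
    {f : Γ → L} {g : Ω → L} {x y : L} (hf : OConv f x) (hg : OConv g y) :
    OConv (fun p : Γ × Ω => f p.1 ⊓ g p.2) (x ⊓ y) := by
  obtain ⟨M1, N1, hM1ne, hM1d, hN1ne, hN1d, hM1l, hN1g, h1⟩ := hf
  obtain ⟨M2, N2, hM2ne, hM2d, hN2ne, hN2d, hM2l, hN2g, h2⟩ := hg
  refine ⟨(fun p : L × L => p.1 ⊓ p.2) '' (M1 ×ˢ M2),
    (fun p : L × L => p.1 ⊓ p.2) '' (N1 ×ˢ N2),
    (hM1ne.prod hM2ne).image _, aux_directed_inf' hM1d hM2d,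
    (hN1ne.prod hN2ne).image _, aux_directed_inf hN1d hN2d,
    aux_isLUB_inf hL hM1l hM2l, aux_isGLB_inf hN1ne hN2ne hN1g hN2g, ?_⟩
  rintro _ ⟨⟨m1, m2⟩, ⟨hm1, hm2⟩, rfl⟩ _ ⟨⟨n1, n2⟩, ⟨hn1, hn2⟩, rfl⟩
  obtain ⟨γ₀, hγ₀⟩ := h1 m1 hm1 n1 hn1
  obtain ⟨ω₀, hω₀⟩ := h2 m2 hm2 n2 hn2
  refine ⟨⟨γ₀, ω₀⟩, ?_⟩
  rintro ⟨γ, ω⟩ ⟨hγ, hω⟩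
  obtain ⟨hl1, hr1⟩ := hγ₀ γ hγ
  obtain ⟨hl2, hr2⟩ := hω₀ ω hω
  exact ⟨inf_le_inf hl1 hl2, inf_le_inf hr1 hr2⟩

end Aux

/-- In an infinitely distributive lattice, uO-convergence is preserved by joins and
meets of nets over the product index set. -/
theorem stmt3 {L : Type u} [Lattice L] (hL : InfDistrib L)
    {Γ : Type v} {Ω : Type w} [Preorder Γ] [Preorder Ω]
    [IsDirected Γ (· ≤ ·)] [Nonempty Γ] [IsDirected Ω (· ≤ ·)] [Nonempty Ω]
    (f : Γ → L) (g : Ω → L) (x y : L) (hf : UOConv f x) (hg : UOConv g y) :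
    UOConv (fun p : Γ × Ω => f p.1 ⊔ g p.2) (x ⊔ y) ∧
    UOConv (fun p : Γ × Ω => f p.1 ⊓ g p.2) (x ⊓ y) := by
  have hsup : ∀ a b s t : L, ((a ⊔ b) ⊓ t) ⊔ s = ((a ⊓ t) ⊔ s) ⊔ ((b ⊓ t) ⊔ s) := by
    intro a b s t
    rw [inf_comm (a ⊔ b) t, aux_inf_sup_distrib hL, inf_comm t a, inf_comm t b,
      sup_sup_distrib_right]
  have hinf : ∀ a b s t : L, ((a ⊓ b) ⊓ t) ⊔ s = ((a ⊓ t) ⊔ s) ⊓ ((b ⊓ t) ⊔ s) := by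
    intro a b s t
    rw [show (a ⊓ b) ⊓ t = (a ⊓ t) ⊓ (b ⊓ t) from inf_inf_distrib_right a b t,
      sup_comm _ s, aux_sup_inf_distrib hL, sup_comm s _, sup_comm s _]
  constructor
  · intro s t hst
    simp_rw [hsup]
    exact OConv.sup' hL (hf s t hst) (hg s t hst)
  · intro s t hst
    simp_rw [hinf]
    exact OConv.inf' hL (hf s t hst) (hg s t hst)
end

section
/- A distributive lattice L is infinitely distributive if and only if uO-convergence is order continuous on L, i.e. if and only if every net in L that O-converges to a point x also uO-converges to x. -/
universe u v w

section Aux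

variable {L : Type u} [Lattice L]

lemma isLUB_sup_image' {S : Set L} {a c : L} (hne : S.Nonempty) (h : IsLUB S a) :
    IsLUB ((fun y => c ⊔ y) '' S) (c ⊔ a) := by
  constructor
  · rintro _ ⟨y, hy, rfl⟩
    exact sup_le_sup_left (h.1 hy) c
  · intro b hb
    obtain ⟨y0, hy0⟩ := hne
    have hc : c ≤ b := le_trans le_sup_left (hb ⟨y0, hy0, rfl⟩)
    have ha : a ≤ b := h.2 (fun y hy => le_trans le_sup_right (hb ⟨y, hy, rfl⟩))
    exact sup_le hc ha

lemma isGLB_inf_image' {S : Set L} {a c : L} (hne : S.Nonempty) (h : IsGLB S a) :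
    IsGLB ((fun y => c ⊓ y) '' S) (c ⊓ a) := by
  constructor
  · rintro _ ⟨y, hy, rfl⟩
    exact inf_le_inf_left c (h.1 hy)
  · intro b hb
    obtain ⟨y0, hy0⟩ := hne
    have hc : b ≤ c := le_trans (hb ⟨y0, hy0, rfl⟩) inf_le_left
    have ha : b ≤ a := h.2 (fun y hy => le_trans (hb ⟨y, hy, rfl⟩) inf_le_right)
    exact le_inf hc ha

lemma directedOn_image_mono {S : Set L} (h : DirectedOn (· ≤ ·) S) {g : L → L}
    (hg : Monotone g) : DirectedOn (· ≤ ·) (g '' S) := by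
  rintro _ ⟨y, hy, rfl⟩ _ ⟨z, hz, rfl⟩
  obtain ⟨w, hw, h1, h2⟩ := h y hy z hz
  exact ⟨g w, ⟨w, hw, rfl⟩, hg h1, hg h2⟩

lemma directedOn_image_mono' {S : Set L} (h : DirectedOn (· ≥ ·) S) {g : L → L}
    (hg : Monotone g) : DirectedOn (· ≥ ·) (g '' S) := by
  rintro _ ⟨y, hy, rfl⟩ _ ⟨z, hz, rfl⟩
  obtain ⟨w, hw, h1, h2⟩ := h y hy z hz
  exact ⟨g w, ⟨w, hw, rfl⟩, hg h1, hg h2⟩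

end Aux

/-- A distributive lattice is infinitely distributive iff uO-convergence is order
continuous, i.e. every net that O-converges to a point also uO-converges to it. -/
theorem stmt4 {L : Type u} [DistribLattice L] :
    InfDistrib L ↔
      ∀ (Γ : Type u) [Preorder Γ] [IsDirected Γ (· ≤ ·)] [Nonempty Γ]
        (f : Γ → L) (x : L), OConv f x → UOConv f x := by
  classical
  constructor
  · rintro ⟨hd1, hd2⟩ Γ _ _ _ f x ⟨M, N, hMne, hMdir, hNne, hNdir, hMlub, hNglb, hev⟩ s t hst
    set g : L → L := fun y => (y ⊓ t) ⊔ s with hg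
    have hgm : Monotone g := fun a b hab => sup_le_sup_right (inf_le_inf_right t hab) s
    have hgeq : g = fun y => s ⊔ (t ⊓ y) := by
      funext y; simp only [hg]; rw [inf_comm, sup_comm]
    refine ⟨g '' M, g '' N, hMne.image g, directedOn_image_mono hMdir hgm,
      hNne.image g, directedOn_image_mono' hNdir hgm, ?_, ?_, ?_⟩
    · have h1 : IsLUB ((fun m => t ⊓ m) '' M) (t ⊓ x) := hd2 t M x hMlub
      have h2 := isLUB_sup_image' (c := s) (hMne.image _) h1
      rw [Set.image_image] at h2
      have : (x ⊓ t) ⊔ s = s ⊔ (t ⊓ x) := by rw [inf_comm, sup_comm]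
      rw [this, hgeq]
      exact h2
    · have h1 : IsGLB ((fun m => t ⊓ m) '' N) (t ⊓ x) := isGLB_inf_image' hNne hNglb
      have h2 := hd1 s _ _ h1
      rw [Set.image_image] at h2
      have : (x ⊓ t) ⊔ s = s ⊔ (t ⊓ x) := by rw [inf_comm, sup_comm]
      rw [this, hgeq]
      exact h2
    · rintro _ ⟨m, hm, rfl⟩ _ ⟨n, hn, rfl⟩
      obtain ⟨γ₀, hγ₀⟩ := hev m hm n hn
      exact ⟨γ₀, fun γ hγ => ⟨hgm (hγ₀ γ hγ).1, hgm (hγ₀ γ hγ).2⟩⟩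
  · intro H
    constructor
    · -- join distributes over infima
      intro x S a hglb
      rcases Set.eq_empty_or_nonempty S with rfl | ⟨s₀, hs₀⟩
      · simp only [Set.image_empty]
        exact ⟨fun y hy => hy.elim, fun b _ => (hglb.2 (fun y hy => hy.elim)).trans le_sup_right⟩
      · set Γ := {F : Finset L // F.Nonempty ∧ ↑F ⊆ S} with hΓ
        haveI : Nonempty Γ := ⟨⟨{s₀}, Finset.singleton_nonempty s₀, by simpa using hs₀⟩⟩
        haveI : IsDirected Γ (· ≤ ·) := by
          constructor
          rintro F G
          refine ⟨⟨F.1 ∪ G.1, F.2.1.inl, ?_⟩, ?_, ?_⟩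
          · rw [Finset.coe_union]; exact Set.union_subset F.2.2 G.2.2
          · exact Finset.le_iff_subset.2 Finset.subset_union_left
          · exact Finset.le_iff_subset.2 Finset.subset_union_right
        set f : Γ → L := fun F => F.1.inf' F.2.1 id with hf
        have hOC : OConv f a := by
          refine ⟨{a}, Set.range f, Set.singleton_nonempty a, directedOn_singleton a,
            Set.range_nonempty f, ?_, isLUB_singleton, ?_, ?_⟩
          · rintro _ ⟨F, rfl⟩ _ ⟨G, rfl⟩
            obtain ⟨U, h1, h2⟩ := directed_of (· ≤ ·) F G
            exact ⟨f U, ⟨U, rfl⟩, Finset.inf'_mono id h1 F.2.1, Finset.inf'_mono id h2 G.2.1⟩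
          · constructor
            · rintro _ ⟨F, rfl⟩
              exact Finset.le_inf' _ _ (fun y hy => hglb.1 (F.2.2 hy))
            · intro b hb
              apply hglb.2
              intro y hy
              have := hb ⟨⟨{y}, Finset.singleton_nonempty y, by simpa using hy⟩, rfl⟩
              simpa [hf] using this
          · rintro _ hm _ ⟨F, rfl⟩
            rw [Set.mem_singleton_iff] at hm
            subst hm
            refine ⟨F, fun G hFG => ?_⟩
            constructor
            · exact Finset.le_inf' _ _ (fun y hy => hglb.1 (G.2.2 hy))
            · exact Finset.inf'_mono id (Finset.le_iff_subset.1 hFG) F.2.1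
        obtain ⟨M', N', hM'ne, _, hN'ne, _, _, hN'glb, hev'⟩ := H Γ f a hOC x (x ⊔ s₀) le_sup_left
        have hax : a ≤ x ⊔ s₀ := (hglb.1 hs₀).trans le_sup_right
        have hlim : (a ⊓ (x ⊔ s₀)) ⊔ x = x ⊔ a := by
          rw [inf_eq_left.2 hax, sup_comm]
        rw [hlim] at hN'glb
        constructor
        · rintro _ ⟨y, hy, rfl⟩
          exact sup_le_sup_left (hglb.1 hy) x
        · intro b hb
          apply hN'glb.2
          intro n hn
          obtain ⟨m, hm⟩ := hM'ne
          obtain ⟨γ₀, hγ₀⟩ := hev' m hm n hn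
          refine le_trans ?_ (hγ₀ γ₀ le_rfl).2
          have h1 : b ≤ f γ₀ ⊔ x := by
            rw [hf]
            rw [Finset.inf'_sup_distrib_right]
            refine Finset.le_inf' _ _ (fun y hy => ?_)
            have := hb ⟨y, γ₀.2.2 hy, rfl⟩
            simpa [sup_comm] using this
          have h2 : b ≤ x ⊔ s₀ := hb ⟨s₀, hs₀, rfl⟩
          calc b ≤ (f γ₀ ⊔ x) ⊓ (x ⊔ s₀) := le_inf h1 h2
          _ = (f γ₀ ⊓ (x ⊔ s₀)) ⊔ x := by
              rw [sup_inf_right]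
              congr 1
              rw [sup_comm x s₀, sup_assoc, sup_idem]
    · -- meet distributes over suprema
      intro x S a hlub
      rcases Set.eq_empty_or_nonempty S with rfl | ⟨s₀, hs₀⟩
      · simp only [Set.image_empty]
        exact ⟨fun y hy => hy.elim, fun b _ => inf_le_right.trans (hlub.2 (fun y hy => hy.elim))⟩
      · set Γ := {F : Finset L // F.Nonempty ∧ ↑F ⊆ S} with hΓ
        haveI : Nonempty Γ := ⟨⟨{s₀}, Finset.singleton_nonempty s₀, by simpa using hs₀⟩⟩
        haveI : IsDirected Γ (· ≤ ·) := by
          constructor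
          rintro F G
          refine ⟨⟨F.1 ∪ G.1, F.2.1.inl, ?_⟩, ?_, ?_⟩
          · rw [Finset.coe_union]; exact Set.union_subset F.2.2 G.2.2
          · exact Finset.le_iff_subset.2 Finset.subset_union_left
          · exact Finset.le_iff_subset.2 Finset.subset_union_right
        set f : Γ → L := fun F => F.1.sup' F.2.1 id with hf
        have hOC : OConv f a := by
          refine ⟨Set.range f, {a}, Set.range_nonempty f, ?_, Set.singleton_nonempty a,
            (by rintro p hp q hq; exact ⟨a, rfl, by simp_all, by simp_all⟩), ?_, isGLB_singleton, ?_⟩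
          · rintro _ ⟨F, rfl⟩ _ ⟨G, rfl⟩
            obtain ⟨U, h1, h2⟩ := directed_of (· ≤ ·) F G
            exact ⟨f U, ⟨U, rfl⟩, Finset.sup'_mono id h1 F.2.1, Finset.sup'_mono id h2 G.2.1⟩
          · constructor
            · rintro _ ⟨F, rfl⟩
              exact Finset.sup'_le _ _ (fun y hy => hlub.1 (F.2.2 hy))
            · intro b hb
              apply hlub.2
              intro y hy
              have := hb ⟨⟨{y}, Finset.singleton_nonempty y, by simpa using hy⟩, rfl⟩
              simpa [hf] using this
          · rintro _ ⟨F, rfl⟩ _ hn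
            rw [Set.mem_singleton_iff] at hn
            subst hn
            refine ⟨F, fun G hFG => ?_⟩
            constructor
            · exact Finset.sup'_mono id (Finset.le_iff_subset.1 hFG) F.2.1
            · exact Finset.sup'_le _ _ (fun y hy => hlub.1 (G.2.2 hy))
        obtain ⟨M', N', hM'ne, _, hN'ne, _, hM'lub, _, hev'⟩ := H Γ f a hOC (x ⊓ s₀) x inf_le_left
        have hlim : (a ⊓ x) ⊔ (x ⊓ s₀) = x ⊓ a := by
          rw [inf_comm a x]
          exact sup_eq_left.2 (inf_le_inf_left x (hlub.1 hs₀))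
        rw [hlim] at hM'lub
        constructor
        · rintro _ ⟨y, hy, rfl⟩
          exact inf_le_inf_left x (hlub.1 hy)
        · intro b hb
          apply hM'lub.2
          intro m hm
          obtain ⟨n, hn⟩ := hN'ne
          obtain ⟨γ₀, hγ₀⟩ := hev' m hm n hn
          refine le_trans (hγ₀ γ₀ le_rfl).1 ?_
          have h1 : f γ₀ ⊓ x ≤ b := by
            rw [hf]
            rw [Finset.sup'_inf_distrib_right]
            refine Finset.sup'_le _ _ (fun y hy => ?_)
            have := hb ⟨y, γ₀.2.2 hy, rfl⟩
            simpa [inf_comm] using this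
          have h2 : x ⊓ s₀ ≤ b := hb ⟨s₀, hs₀, rfl⟩
          exact sup_le h1 h2
end

section
/- Let L be an infinitely distributive lattice and let (x_γ)_{γ∈Γ} be an order bounded net in L, i.e. there exist a, b ∈ L with x_γ ∈ [a,b] for every γ ∈ Γ. Then (x_γ) uO-converges to x if and only if (x_γ) O-converges to x. -/
universe u v w

lemma lub_sup_const {L : Type u} [Lattice L] (s a : L) {S : Set L} (hne : S.Nonempty)
    (h : IsLUB S a) : IsLUB ((fun y => y ⊔ s) '' S) (a ⊔ s) := by
  constructor
  · rintro _ ⟨z, hz, rfl⟩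
    exact sup_le_sup_right (h.1 hz) s
  · intro u hu
    obtain ⟨z, hz⟩ := hne
    have hs : s ≤ u := le_trans le_sup_right (hu ⟨z, hz, rfl⟩)
    have ha : a ≤ u := h.2 (fun y hy => le_trans le_sup_left (hu ⟨y, hy, rfl⟩))
    exact sup_le ha hs

lemma glb_inf_const {L : Type u} [Lattice L] (t a : L) {S : Set L} (hne : S.Nonempty)
    (h : IsGLB S a) : IsGLB ((fun y => y ⊓ t) '' S) (a ⊓ t) := by
  constructor
  · rintro _ ⟨z, hz, rfl⟩
    exact inf_le_inf_right t (h.1 hz)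
  · intro u hu
    obtain ⟨z, hz⟩ := hne
    have ht : u ≤ t := le_trans (hu ⟨z, hz, rfl⟩) inf_le_right
    have ha : u ≤ a := h.2 (fun y hy => le_trans (hu ⟨y, hy, rfl⟩) inf_le_left)
    exact le_inf ha ht

/-- In an infinitely distributive lattice, an order bounded net uO-converges to `x`
iff it O-converges to `x`. -/
theorem stmt5 {L : Type u} [Lattice L] (hL : InfDistrib L)
    {Γ : Type v} [Preorder Γ] [IsDirected Γ (· ≤ ·)] [Nonempty Γ]
    (f : Γ → L) (a b x : L) (hbd : ∀ γ, f γ ∈ Set.Icc a b) :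
    UOConv f x ↔ OConv f x := by
  constructor
  · intro huo
    have hst : a ⊓ x ≤ b ⊔ x := le_trans inf_le_right le_sup_right
    have h := huo (a ⊓ x) (b ⊔ x) hst
    have hfun : (fun γ => (f γ ⊓ (b ⊔ x)) ⊔ (a ⊓ x)) = f := by
      funext γ
      have h1 : f γ ⊓ (b ⊔ x) = f γ := inf_eq_left.2 (le_trans (hbd γ).2 le_sup_left)
      have h2 : f γ ⊔ (a ⊓ x) = f γ := sup_eq_left.2 (le_trans inf_le_left (hbd γ).1)
      rw [h1, h2]
    have hx : (x ⊓ (b ⊔ x)) ⊔ (a ⊓ x) = x := by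
      rw [inf_eq_left.2 le_sup_right, sup_eq_left.2 inf_le_right]
    rwa [hfun, hx] at h
  · rintro ⟨M, N, hMne, hMdir, hNne, hNdir, hMlub, hNglb, hev⟩ s t hst
    set g : L → L := fun y => (y ⊓ t) ⊔ s with hg
    have hgmono : Monotone g := fun y z hyz =>
      sup_le_sup_right (inf_le_inf_right t hyz) s
    refine ⟨g '' M, g '' N, hMne.image g, ?_,
      hNne.image g, ?_, ?_, ?_, ?_⟩
    · rintro _ ⟨y, hy, rfl⟩ _ ⟨z, hz, rfl⟩
      obtain ⟨w, hw, hwy, hwz⟩ := hMdir y hy z hz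
      exact ⟨g w, ⟨w, hw, rfl⟩, hgmono hwy, hgmono hwz⟩
    · rintro _ ⟨y, hy, rfl⟩ _ ⟨z, hz, rfl⟩
      obtain ⟨w, hw, hwy, hwz⟩ := hNdir y hy z hz
      exact ⟨g w, ⟨w, hw, rfl⟩, hgmono hwy, hgmono hwz⟩
    · -- IsLUB (g '' M) ((x ⊓ t) ⊔ s)
      have h1 := hL.2 t M x hMlub
      have h2 := lub_sup_const s (t ⊓ x) (hMne.image _) h1
      have : ((fun y => y ⊔ s) '' ((fun y => t ⊓ y) '' M)) = g '' M := by
        rw [Set.image_image]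
        exact Set.image_congr (fun y _ => by simp [hg, inf_comm])
      rw [this, inf_comm t x] at h2
      exact h2
    · -- IsGLB (g '' N) ((x ⊓ t) ⊔ s)
      have h1 := glb_inf_const t x hNne hNglb
      have h2 := hL.1 s _ _ h1
      have : ((fun y => s ⊔ y) '' ((fun y => y ⊓ t) '' N)) = g '' N := by
        rw [Set.image_image]
        exact Set.image_congr (fun y _ => by simp [hg, sup_comm])
      rw [this, sup_comm s (x ⊓ t)] at h2
      exact h2
    · rintro _ ⟨m, hm, rfl⟩ _ ⟨n, hn, rfl⟩
      obtain ⟨γ₀, hγ₀⟩ := hev m hm n hn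
      exact ⟨γ₀, fun γ hγ => ⟨hgmono (hγ₀ γ hγ).1, hgmono (hγ₀ γ hγ).2⟩⟩
end

section
/- A sublattice Y of an infinitely distributive lattice L is O-closed if and only if it is uO-closed. -/
universe u v w

section Aux

variable {L : Type u} [Lattice L]

lemma infd_inf_sup (hL : InfDistrib L) (c a b : L) :
    c ⊓ (a ⊔ b) = (c ⊓ a) ⊔ (c ⊓ b) := by
  have h := hL.2 c {a, b} (a ⊔ b) isLUB_pair
  rw [Set.image_pair] at h
  exact h.unique isLUB_pair

lemma directedOn_image_le {M : Set L} {φ : L → L} (hφ : Monotone φ)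
    (h : DirectedOn (· ≤ ·) M) : DirectedOn (· ≤ ·) (φ '' M) := by
  rintro _ ⟨a, ha, rfl⟩ _ ⟨b, hb, rfl⟩
  obtain ⟨c, hc, h1, h2⟩ := h a ha b hb
  exact ⟨φ c, Set.mem_image_of_mem _ hc, hφ h1, hφ h2⟩

lemma directedOn_image_ge {M : Set L} {φ : L → L} (hφ : Monotone φ)
    (h : DirectedOn (· ≥ ·) M) : DirectedOn (· ≥ ·) (φ '' M) := by
  rintro _ ⟨a, ha, rfl⟩ _ ⟨b, hb, rfl⟩
  obtain ⟨c, hc, h1, h2⟩ := h a ha b hb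
  exact ⟨φ c, Set.mem_image_of_mem _ hc, hφ h1, hφ h2⟩

lemma isLUB_image_inf_right (hL : InfDistrib L) {S : Set L} {a : L}
    (h : IsLUB S a) (t : L) : IsLUB ((fun z => z ⊓ t) '' S) (a ⊓ t) := by
  have h2 := hL.2 t S a h
  have he : (fun s => t ⊓ s) '' S = (fun z => z ⊓ t) '' S :=
    Set.image_congr' (fun z => inf_comm t z)
  rw [he, inf_comm t a] at h2
  exact h2

lemma isGLB_image_sup_right (hL : InfDistrib L) {S : Set L} {a : L}
    (h : IsGLB S a) (s : L) : IsGLB ((fun z => z ⊔ s) '' S) (a ⊔ s) := by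
  have h2 := hL.1 s S a h
  have he : (fun z => s ⊔ z) '' S = (fun z => z ⊔ s) '' S :=
    Set.image_congr' (fun z => sup_comm s z)
  rw [he, sup_comm s a] at h2
  exact h2

lemma isLUB_image_sup_right {S : Set L} {a : L} (hS : S.Nonempty)
    (h : IsLUB S a) (s : L) : IsLUB ((fun z => z ⊔ s) '' S) (a ⊔ s) := by
  constructor
  · rintro _ ⟨z, hz, rfl⟩
    exact sup_le_sup_right (h.1 hz) s
  · intro u hu
    obtain ⟨z0, hz0⟩ := hS
    have hs : s ≤ u := le_trans le_sup_right (hu (Set.mem_image_of_mem _ hz0))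
    have ha : a ≤ u := h.2 fun z hz => le_trans le_sup_left (hu (Set.mem_image_of_mem _ hz))
    exact sup_le ha hs

lemma isGLB_image_inf_right {S : Set L} {a : L} (hS : S.Nonempty)
    (h : IsGLB S a) (t : L) : IsGLB ((fun z => z ⊓ t) '' S) (a ⊓ t) := by
  constructor
  · rintro _ ⟨z, hz, rfl⟩
    exact inf_le_inf_right t (h.1 hz)
  · intro u hu
    obtain ⟨z0, hz0⟩ := hS
    have hs : u ≤ t := le_trans (hu (Set.mem_image_of_mem _ hz0)) inf_le_right
    have ha : u ≤ a := h.2 fun z hz => le_trans (hu (Set.mem_image_of_mem _ hz)) inf_le_left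
    exact le_inf ha hs

lemma oconv_trunc (hL : InfDistrib L) {Γ : Type v} [Preorder Γ] {f : Γ → L} {x : L}
    (h : OConv f x) (s t : L) :
    OConv (fun γ => (f γ ⊓ t) ⊔ s) ((x ⊓ t) ⊔ s) := by
  obtain ⟨M, N, hMne, hMdir, hNne, hNdir, hMlub, hNglb, hev⟩ := h
  have hφ : Monotone (fun z : L => (z ⊓ t) ⊔ s) :=
    fun a b hab => sup_le_sup_right (inf_le_inf_right t hab) s
  refine ⟨(fun z => (z ⊓ t) ⊔ s) '' M, (fun z => (z ⊓ t) ⊔ s) '' N,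
    hMne.image _, directedOn_image_le hφ hMdir, hNne.image _,
    directedOn_image_ge hφ hNdir, ?_, ?_, ?_⟩
  · have h1 := isLUB_image_inf_right hL hMlub t
    have h2 := isLUB_image_sup_right (hMne.image _) h1 s
    rwa [Set.image_image] at h2
  · have h1 := isGLB_image_inf_right hNne hNglb t
    have h2 := isGLB_image_sup_right hL h1 s
    rwa [Set.image_image] at h2
  · rintro _ ⟨m, hm, rfl⟩ _ ⟨n, hn, rfl⟩
    obtain ⟨γ₀, hγ₀⟩ := hev m hm n hn
    exact ⟨γ₀, fun γ hγ => ⟨hφ (hγ₀ γ hγ).1, hφ (hγ₀ γ hγ).2⟩⟩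

lemma oconv_to_uoconv (hL : InfDistrib L) {Γ : Type v} [Preorder Γ] {f : Γ → L} {x : L}
    (h : OConv f x) : UOConv f x :=
  fun s t _ => oconv_trunc hL h s t

lemma oconv_const {Γ : Type v} [Preorder Γ] [Nonempty Γ] (c : L) :
    OConv (fun _ : Γ => c) c := by
  refine ⟨{c}, {c}, Set.singleton_nonempty c, (by rintro _ rfl _ rfl; exact ⟨_, rfl, le_rfl, le_rfl⟩),
    Set.singleton_nonempty c, (by rintro _ rfl _ rfl; exact ⟨_, rfl, le_rfl, le_rfl⟩),
    isLUB_singleton, isGLB_singleton, ?_⟩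
  rintro m rfl n rfl
  exact ⟨Classical.arbitrary Γ, fun γ _ => ⟨le_refl _, le_refl _⟩⟩

lemma uoconv_const {Γ : Type v} [Preorder Γ] [Nonempty Γ] (c : L) :
    UOConv (fun _ : Γ => c) c :=
  fun s t _ => oconv_const ((c ⊓ t) ⊔ s)

lemma subset_OAdh1 (X : Set L) : X ⊆ OAdh1 X := by
  intro x hx
  refine ⟨PUnit.{u+1}, inferInstance, ⟨fun a b => ⟨a, le_refl a, le_refl a⟩⟩,
    ⟨PUnit.unit⟩, fun _ => x, fun _ => hx, oconv_const x⟩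

lemma subset_UOAdh1 (X : Set L) : X ⊆ UOAdh1 X := by
  intro x hx
  refine ⟨PUnit.{u+1}, inferInstance, ⟨fun a b => ⟨a, le_refl a, le_refl a⟩⟩,
    ⟨PUnit.unit⟩, fun _ => x, fun _ => hx, uoconv_const x⟩

lemma median_eq (hL : InfDistrib L) (a x y : L) :
    (a ⊓ (x ⊔ y)) ⊔ (x ⊓ y) = (x ⊓ (a ⊔ y)) ⊔ (a ⊓ y) := by
  rw [infd_inf_sup hL a x y, infd_inf_sup hL x a y, inf_comm x a]
  simp only [sup_assoc, sup_comm, sup_left_comm]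

end Aux

/-- A sublattice of an infinitely distributive lattice is O-closed iff it is uO-closed. -/
theorem stmt8 {L : Type u} [Lattice L] (hL : InfDistrib L) (Y : Set L)
    (hY : IsSubl Y) :
    OClosedSet Y ↔ UOClosedSet Y := by
  constructor
  · intro hO
    have hOeq : OAdh1 Y = Y := hO
    apply Set.Subset.antisymm
    · rintro x ⟨Γ, instΓ, hdir, hne, f, hfY, hf⟩
      obtain ⟨β₀⟩ := hne
      set y := f β₀ with hy
      have hyY : y ∈ Y := hfY β₀
      have step1 : ∀ γ : Γ, (x ⊓ (f γ ⊔ y)) ⊔ (f γ ⊓ y) ∈ Y := by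
        intro γ
        have htY : f γ ⊔ y ∈ Y := (hY _ (hfY γ) _ hyY).1
        have hsY : f γ ⊓ y ∈ Y := (hY _ (hfY γ) _ hyY).2
        have hst : f γ ⊓ y ≤ f γ ⊔ y := le_trans inf_le_left le_sup_left
        have hconv := hf (f γ ⊓ y) (f γ ⊔ y) hst
        have hmem : (x ⊓ (f γ ⊔ y)) ⊔ (f γ ⊓ y) ∈ OAdh1 Y := by
          refine ⟨Γ, instΓ, hdir, ⟨β₀⟩, fun δ => (f δ ⊓ (f γ ⊔ y)) ⊔ (f γ ⊓ y),
            fun δ => (hY _ ((hY _ (hfY δ) _ htY).2) _ hsY).1, hconv⟩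
        rwa [hOeq] at hmem
      have hst0 : x ⊓ y ≤ x ⊔ y := le_trans inf_le_left le_sup_left
      have hconv0 := hf (x ⊓ y) (x ⊔ y) hst0
      have hxlim : (x ⊓ (x ⊔ y)) ⊔ (x ⊓ y) = x := by
        rw [inf_eq_left.mpr le_sup_left, sup_eq_left.mpr inf_le_left]
      have hfun : (fun γ => (f γ ⊓ (x ⊔ y)) ⊔ (x ⊓ y))
          = fun γ => (x ⊓ (f γ ⊔ y)) ⊔ (f γ ⊓ y) :=
        funext fun γ => median_eq hL (f γ) x y
      rw [hfun, hxlim] at hconv0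
      have hmem : x ∈ OAdh1 Y := ⟨Γ, instΓ, hdir, ⟨β₀⟩, _, step1, hconv0⟩
      rwa [hOeq] at hmem
    · exact subset_UOAdh1 Y
  · intro hU
    have hUeq : UOAdh1 Y = Y := hU
    apply Set.Subset.antisymm
    · rintro x ⟨Γ, instΓ, hdir, hne, f, hfY, hf⟩
      have hmem : x ∈ UOAdh1 Y :=
        ⟨Γ, instΓ, hdir, hne, f, hfY, oconv_to_uoconv hL hf⟩
      rwa [hUeq] at hmem
    · exact subset_OAdh1 Y
end

section
/- Let A be a down-set in a lattice L. Then every x in the 1-O-adherence A^O_1 is the supremum of an upward directed subset of A. Moreover, if L is infinitely distributive, then A^O_1 is a down-set. -/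
universe u v w

/-- If `A` is a down-set in a lattice `L`, then every point of the 1-O-adherence of `A`
is the supremum of an upward directed subset of `A`; moreover, if `L` is infinitely
distributive, the 1-O-adherence of `A` is a down-set. -/
theorem stmt9 {L : Type u} [Lattice L] (A : Set L) (hA : IsLowerSet A) :
    (∀ x ∈ OAdh1 A, ∃ M ⊆ A, M.Nonempty ∧ DirectedOn (· ≤ ·) M ∧ IsLUB M x) ∧
    (InfDistrib L → IsLowerSet (OAdh1 A)) := by
  have part1 : ∀ x ∈ OAdh1 A, ∃ M ⊆ A, M.Nonempty ∧ DirectedOn (· ≤ ·) M ∧ IsLUB M x := by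
    rintro x ⟨Γ, _, hdir, hne, f, hf, M, N, hMne, hMdir, hNne, hNdir, hlub, hglb, hev⟩
    refine ⟨M, ?_, hMne, hMdir, hlub⟩
    intro m hm
    obtain ⟨n, hn⟩ := hNne
    obtain ⟨γ₀, h⟩ := hev m hm n hn
    exact hA (h γ₀ le_rfl).1 (hf γ₀)
  refine ⟨part1, fun hD => ?_⟩
  intro x y hyx hx
  obtain ⟨M, hMA, hMne, hMdir, hlub⟩ := part1 x hx
  set M' : Set L := (fun s => y ⊓ s) '' M with hM'
  have hM'A : ∀ z ∈ M', z ∈ A := by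
    rintro _ ⟨m, hm, rfl⟩; exact hA inf_le_right (hMA hm)
  have hM'le : ∀ z ∈ M', z ≤ y := by rintro _ ⟨m, hm, rfl⟩; exact inf_le_left
  have hM'ne : M'.Nonempty := hMne.image _
  have hM'dir : DirectedOn (· ≤ ·) M' := by
    rintro _ ⟨m1, hm1, rfl⟩ _ ⟨m2, hm2, rfl⟩
    obtain ⟨m, hm, h1, h2⟩ := hMdir m1 hm1 m2 hm2
    exact ⟨y ⊓ m, ⟨m, hm, rfl⟩, inf_le_inf_left _ h1, inf_le_inf_left _ h2⟩
  have hlub' : IsLUB M' y := by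
    have := hD.2 y M x hlub
    rwa [inf_eq_left.mpr hyx] at this
  have hNdir' : DirectedOn (· ≥ ·) ({y} : Set L) := by
    intro a ha b hb; exact ⟨y, rfl, ha.ge, hb.ge⟩
  refine ⟨↥M', inferInstance, ⟨fun a b => ?_⟩, hM'ne.to_subtype, Subtype.val,
    fun γ => hM'A _ γ.2, M', {y}, hM'ne, hM'dir, ⟨y, rfl⟩, hNdir', hlub', isGLB_singleton,
    fun m hm n hn => ⟨⟨m, hm⟩, fun γ hγ => ⟨hγ, le_of_le_of_eq (hM'le _ γ.2) hn.symm⟩⟩⟩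
  obtain ⟨c, hc, h1, h2⟩ := hM'dir a a.2 b b.2
  exact ⟨⟨c, hc⟩, h1, h2⟩
end

section
/- Let L be an infinitely distributive lattice and let A ⊆ L be an ideal. Then the 1-O-adherence A^O_1 equals the 1-uO-adherence A^uO_1, and this set is an ideal of L that is both uO-closed and O-closed. -/
universe u v w

section Aux

variable {L : Type u} [Lattice L]

lemma aux_isLUB_sup_s10 {S : Set L} {a : L} (s : L) (hne : S.Nonempty) (h : IsLUB S a) :
    IsLUB ((fun y => y ⊔ s) '' S) (a ⊔ s) := by
  constructor
  · rintro _ ⟨y, hy, rfl⟩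
    exact sup_le_sup_right (h.1 hy) s
  · intro u hu
    obtain ⟨y0, hy0⟩ := hne
    have hs : s ≤ u := le_trans le_sup_right (hu ⟨y0, hy0, rfl⟩)
    have ha : a ≤ u := h.2 fun y hy => le_trans le_sup_left (hu ⟨y, hy, rfl⟩)
    exact sup_le ha hs

lemma aux_isGLB_inf_s10 {S : Set L} {a : L} (t : L) (hne : S.Nonempty) (h : IsGLB S a) :
    IsGLB ((fun y => y ⊓ t) '' S) (a ⊓ t) := by
  constructor
  · rintro _ ⟨y, hy, rfl⟩
    exact inf_le_inf_right t (h.1 hy)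
  · intro u hu
    obtain ⟨y0, hy0⟩ := hne
    have hs : u ≤ t := le_trans (hu ⟨y0, hy0, rfl⟩) inf_le_right
    have ha : u ≤ a := h.2 fun y hy => le_trans (hu ⟨y, hy, rfl⟩) inf_le_left
    exact le_inf ha hs

/-- the map `y ↦ (y ⊓ t) ⊔ s` is monotone, stated directly -/
lemma aux_mono (s t : L) {a b : L} (h : a ≤ b) : (a ⊓ t) ⊔ s ≤ (b ⊓ t) ⊔ s :=
  sup_le_sup_right (inf_le_inf_right t h) s

/-- O-convergence is preserved by `y ↦ (y ⊓ t) ⊔ s` in an infinitely distributive lattice. -/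
lemma oconv_map (hL : InfDistrib L) {Γ : Type v} [Preorder Γ] {f : Γ → L} {x : L}
    (s t : L) (h : OConv f x) : OConv (fun γ => (f γ ⊓ t) ⊔ s) ((x ⊓ t) ⊔ s) := by
  obtain ⟨M, N, hMne, hMdir, hNne, hNdir, hMlub, hNglb, hev⟩ := h
  refine ⟨(fun y => (y ⊓ t) ⊔ s) '' M, (fun y => (y ⊓ t) ⊔ s) '' N,
    hMne.image _, ?_, hNne.image _, ?_, ?_, ?_, ?_⟩
  · rintro _ ⟨a, ha, rfl⟩ _ ⟨b, hb, rfl⟩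
    obtain ⟨c, hc, hac, hbc⟩ := hMdir a ha b hb
    exact ⟨_, ⟨c, hc, rfl⟩, aux_mono s t hac, aux_mono s t hbc⟩
  · rintro _ ⟨a, ha, rfl⟩ _ ⟨b, hb, rfl⟩
    obtain ⟨c, hc, hac, hbc⟩ := hNdir a ha b hb
    exact ⟨_, ⟨c, hc, rfl⟩, aux_mono s t hac, aux_mono s t hbc⟩
  · have h1 : IsLUB ((fun y => t ⊓ y) '' M) (t ⊓ x) := hL.2 t M x hMlub
    have h2 : IsLUB ((fun y => y ⊔ s) '' ((fun y => t ⊓ y) '' M)) ((t ⊓ x) ⊔ s) :=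
      aux_isLUB_sup_s10 s (hMne.image _) h1
    have him : (fun y => y ⊔ s) '' ((fun y => t ⊓ y) '' M) = (fun y => (y ⊓ t) ⊔ s) '' M := by
      rw [Set.image_image]
      have : (fun y : L => (t ⊓ y) ⊔ s) = fun y : L => (y ⊓ t) ⊔ s := by
        funext y; rw [inf_comm]
      rw [this]
    rw [him, inf_comm t x] at h2
    exact h2
  · have h1 : IsGLB ((fun y => y ⊓ t) '' N) (x ⊓ t) := aux_isGLB_inf_s10 t hNne hNglb
    have h2 : IsGLB ((fun y => s ⊔ y) '' ((fun y => y ⊓ t) '' N)) (s ⊔ (x ⊓ t)) :=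
      hL.1 s _ _ h1
    have him : (fun y => s ⊔ y) '' ((fun y => y ⊓ t) '' N) = (fun y => (y ⊓ t) ⊔ s) '' N := by
      rw [Set.image_image]
      have : (fun y : L => s ⊔ (y ⊓ t)) = fun y : L => (y ⊓ t) ⊔ s := by
        funext y; rw [sup_comm]
      rw [this]
    rw [him, sup_comm s (x ⊓ t)] at h2
    exact h2
  · rintro _ ⟨m, hm, rfl⟩ _ ⟨n, hn, rfl⟩
    obtain ⟨γ₀, hγ₀⟩ := hev m hm n hn
    exact ⟨γ₀, fun γ hγ => ⟨aux_mono s t (hγ₀ γ hγ).1, aux_mono s t (hγ₀ γ hγ).2⟩⟩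

/-- The directed-sup closure of an ideal, characterized via principal cuts. -/
def DSet (A : Set L) : Set L :=
  {x | (A ∩ Set.Iic x).Nonempty ∧ IsLUB (A ∩ Set.Iic x) x}

lemma a_subset_dset {A : Set L} : A ⊆ DSet A := fun a ha =>
  ⟨⟨a, ha, le_refl a⟩, ⟨fun _ hc => hc.2, fun _ hu => hu ⟨ha, le_refl a⟩⟩⟩

lemma oadh_subset_dset {A : Set L} (hdown : IsLowerSet A) : OAdh1 A ⊆ DSet A := by
  rintro x ⟨Γ, inst, hdir, hne, f, hf, M, N, hMne, hMdir, hNne, hNdir, hMlub, hNglb, hev⟩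
  have hMA : M ⊆ A := by
    intro m hm
    obtain ⟨n, hn⟩ := hNne
    obtain ⟨γ₀, hγ₀⟩ := hev m hm n hn
    exact hdown (hγ₀ γ₀ le_rfl).1 (hf γ₀)
  obtain ⟨m0, hm0⟩ := hMne
  refine ⟨⟨m0, hMA hm0, hMlub.1 hm0⟩, ⟨fun _ hc => hc.2, fun u hu => ?_⟩⟩
  exact hMlub.2 fun m hm => hu ⟨hMA hm, hMlub.1 hm⟩

lemma dset_subset_oadh {A : Set L} (hjoin : ∀ a ∈ A, ∀ b ∈ A, a ⊔ b ∈ A) :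
    DSet A ⊆ OAdh1 A := by
  rintro x ⟨hne, hlub⟩
  set S : Set L := A ∩ Set.Iic x with hS
  have hdir : DirectedOn (· ≤ ·) S := by
    rintro a ⟨haA, hax⟩ b ⟨hbA, hbx⟩
    exact ⟨a ⊔ b, ⟨hjoin a haA b hbA, sup_le hax hbx⟩, le_sup_left, le_sup_right⟩
  refine ⟨↥S, inferInstance, ⟨fun a b => ?_⟩, hne.to_subtype, Subtype.val,
    fun γ => γ.2.1, S, {x}, hne, hdir, ⟨x, rfl⟩, (by haveI : Std.Refl (fun a b : L => a ≥ b) := ⟨fun y => le_refl y⟩; exact directedOn_singleton x),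
    hlub, isGLB_singleton, ?_⟩
  · obtain ⟨c, hc, hac, hbc⟩ := hdir a.1 a.2 b.1 b.2
    exact ⟨⟨c, hc⟩, hac, hbc⟩
  · intro m hm n hn
    rcases hn with rfl
    exact ⟨⟨m, hm⟩, fun γ hγ => ⟨hγ, γ.2.2⟩⟩

lemma oadh_subset_uoadh (hL : InfDistrib L) {A : Set L} : OAdh1 A ⊆ UOAdh1 A := by
  rintro x ⟨Γ, inst, hdir, hne, f, hf, ho⟩
  exact ⟨Γ, inst, hdir, hne, f, hf, fun s t _ => oconv_map hL s t ho⟩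

lemma uoadh_subset_oadh {A : Set L} (hdown : IsLowerSet A)
    (hjoin : ∀ a ∈ A, ∀ b ∈ A, a ⊔ b ∈ A) : UOAdh1 A ⊆ OAdh1 A := by
  rintro x ⟨Γ, inst, hdir, hne, f, hf, huo⟩
  obtain ⟨γ₀⟩ := hne
  have h := huo (x ⊓ f γ₀) x inf_le_left
  have hx : (x ⊓ x) ⊔ (x ⊓ f γ₀) = x := by simp
  rw [hx] at h
  exact ⟨Γ, inst, hdir, ⟨γ₀⟩, _,
    fun γ => hjoin _ (hdown inf_le_left (hf γ)) _ (hdown inf_le_right (hf γ₀)), h⟩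

lemma dset_lower (hL : InfDistrib L) {A : Set L} (hdown : IsLowerSet A) :
    IsLowerSet (DSet A) := by
  intro a b hba ⟨hne, hlub⟩
  have h1 : IsLUB ((fun y => b ⊓ y) '' (A ∩ Set.Iic a)) (b ⊓ a) := hL.2 b _ _ hlub
  have hsub : (fun y => b ⊓ y) '' (A ∩ Set.Iic a) ⊆ A ∩ Set.Iic b := by
    rintro _ ⟨m, hm, rfl⟩
    exact ⟨hdown inf_le_right hm.1, inf_le_left⟩
  have hba' : b ⊓ a = b := inf_eq_left.mpr hba
  refine ⟨(hne.image _).mono hsub, ⟨fun _ hc => hc.2, fun u hu => ?_⟩⟩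
  calc b = b ⊓ a := hba'.symm
    _ ≤ u := h1.2 fun c hc => hu (hsub hc)

lemma dset_join {A : Set L} : ∀ a ∈ DSet A, ∀ b ∈ DSet A, a ⊔ b ∈ DSet A := by
  rintro a ⟨hane, halub⟩ b ⟨hbne, hblub⟩
  obtain ⟨c, hcA, hca⟩ := hane
  refine ⟨⟨c, hcA, le_trans hca le_sup_left⟩, ⟨fun _ hc => hc.2, fun u hu => ?_⟩⟩
  have ha : a ≤ u := halub.2 fun c hc => hu ⟨hc.1, le_trans hc.2 le_sup_left⟩
  have hb : b ≤ u := hblub.2 fun c hc => hu ⟨hc.1, le_trans hc.2 le_sup_right⟩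
  exact sup_le ha hb

lemma dset_idem {A : Set L} : DSet (DSet A) ⊆ DSet A := by
  rintro x ⟨hne, hlub⟩
  obtain ⟨m, hmD, hmx⟩ := hne
  obtain ⟨c, hcA, hcm⟩ := hmD.1
  refine ⟨⟨c, hcA, le_trans hcm hmx⟩, ⟨fun _ hc => hc.2, fun u hu => ?_⟩⟩
  refine hlub.2 fun m hm => ?_
  exact hm.1.2.2 fun c hc => hu ⟨hc.1, le_trans hc.2 hm.2⟩

lemma oadh_mono {A B : Set L} (hAB : A ⊆ B) : OAdh1 A ⊆ OAdh1 B := by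
  rintro x ⟨Γ, inst, hdir, hne, f, hf, ho⟩
  exact ⟨Γ, inst, hdir, hne, f, fun γ => hAB (hf γ), ho⟩

end Aux

/-- For an ideal `A` of an infinitely distributive lattice, the 1-O-adherence equals
the 1-uO-adherence, and this set is an ideal that is both uO-closed and O-closed. -/
theorem stmt10 {L : Type u} [Lattice L] (hL : InfDistrib L) (A : Set L)
    (hdown : IsLowerSet A) (hjoin : ∀ a ∈ A, ∀ b ∈ A, a ⊔ b ∈ A) :
    OAdh1 A = UOAdh1 A ∧
    IsLowerSet (OAdh1 A) ∧ (∀ a ∈ OAdh1 A, ∀ b ∈ OAdh1 A, a ⊔ b ∈ OAdh1 A) ∧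
    UOClosedSet (OAdh1 A) ∧ OClosedSet (OAdh1 A) := by
  have e1 : OAdh1 A = DSet A :=
    subset_antisymm (oadh_subset_dset hdown) (dset_subset_oadh hjoin)
  have e2 : OAdh1 A = UOAdh1 A :=
    subset_antisymm (oadh_subset_uoadh hL) (uoadh_subset_oadh hdown hjoin)
  have hDlow : IsLowerSet (DSet A) := dset_lower hL hdown
  have hDjoin : ∀ a ∈ DSet A, ∀ b ∈ DSet A, a ⊔ b ∈ DSet A := dset_join
  have e3 : OAdh1 (DSet A) = DSet A := by
    apply subset_antisymm ((oadh_subset_dset hDlow).trans dset_idem)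
    calc DSet A = OAdh1 A := e1.symm
      _ ⊆ OAdh1 (DSet A) := oadh_mono a_subset_dset
  have e4 : UOAdh1 (DSet A) = DSet A := by
    apply subset_antisymm ((uoadh_subset_oadh hDlow hDjoin).trans e3.le)
    calc DSet A = OAdh1 (DSet A) := e3.symm
      _ ⊆ UOAdh1 (DSet A) := oadh_subset_uoadh hL
  refine ⟨e2, ?_, ?_, ?_, ?_⟩
  · rw [e1]; exact hDlow
  · rw [e1]; exact hDjoin
  · show UOAdh1 (OAdh1 A) = OAdh1 A
    rw [e1]; exact e4
  · show OAdh1 (OAdh1 A) = OAdh1 A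
    rw [e1]; exact e3
end

section
/- Let Y be a sublattice of a lattice L and let A, B ⊆ Y. If A^{+-} ⊆ B^{+-}, then A^{+_Y −_Y} ⊆ B^{+_Y −_Y}. -/
universe u v w

/-- upper bounds taken within the sublattice `Y` : `A^{+_Y}` -/
def ubIn {L : Type u} [Lattice L] (Y A : Set L) : Set L := upperBounds A ∩ Y

/-- lower bounds taken within the sublattice `Y` : `A^{-_Y}` -/
def lbIn {L : Type u} [Lattice L] (Y A : Set L) : Set L := lowerBounds A ∩ Y

/-- a lower cut of `L`, i.e. an element of the Dedekind-MacNeille completion DM(L). -/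
def IsLCut {L : Type u} [Lattice L] (D : Set L) : Prop :=
  lowerBounds (upperBounds D) = D

/-- a lower cut of the sublattice `Y` (bounds taken in `Y`), i.e. an element of DM(Y). -/
def IsLCutIn {L : Type u} [Lattice L] (Y A : Set L) : Prop :=
  A ⊆ Y ∧ lbIn Y (ubIn Y A) = A

/-- Property (A): for every `A ⊆ Y` and every lower bound `x` of `A` there is a lower
bound `y` of `A` lying in `Y` with `x ≤ y`. -/
def PropertyA {L : Type u} [Lattice L] (Y : Set L) : Prop :=
  ∀ A ⊆ Y, ∀ x ∈ lowerBounds A, ∃ y ∈ lowerBounds A ∩ Y, x ≤ y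

/-- Property (B): for every `A ⊆ Y` and every upper bound `x` of `A` there is an upper
bound `y` of `A` lying in `Y` with `y ≤ x`. -/
def PropertyB {L : Type u} [Lattice L] (Y : Set L) : Prop :=
  ∀ A ⊆ Y, ∀ x ∈ upperBounds A, ∃ y ∈ upperBounds A ∩ Y, y ≤ x

/-- Lemma: for subsets `A, B` of a sublattice `Y`, if `A^{+-} ⊆ B^{+-}` (bounds in `L`)
then `A^{+_Y -_Y} ⊆ B^{+_Y -_Y}` (bounds in `Y`). -/
theorem stmt11 {L : Type u} [Lattice L] (Y : Set L) (hY : IsSubl Y)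
    (A B : Set L) (hA : A ⊆ Y) (hB : B ⊆ Y)
    (h : lowerBounds (upperBounds A) ⊆ lowerBounds (upperBounds B)) :
    lbIn Y (ubIn Y A) ⊆ lbIn Y (ubIn Y B) := by
  rintro x ⟨hxl, hxY⟩
  refine ⟨fun v hv => ?_, hxY⟩
  obtain ⟨hvB, hvY⟩ := hv
  have hvA : v ∈ upperBounds A := fun a ha =>
    h (fun u hu => hu ha) hvB
  exact hxl ⟨hvA, hvY⟩
end

section
/- Let L be a lattice and Y ⊆ L a sublattice. Then the map i sending each A in the Dedekind–MacNeille completion DM(Y) of Y to A^{+-} (upper bounds and lower bounds taken in L) is an order-embedding of DM(Y) into DM(L): it maps lower cuts of Y to lower cuts of L, and for A, B ∈ DM(Y) one has A ⊆ B if and only if A^{+-} ⊆ B^{+-}. -/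
universe u v w

/-- The map `A ↦ A^{+-}` (bounds in `L`) sends lower cuts of a sublattice `Y` to lower
cuts of `L`, and is an order-embedding of DM(Y) into DM(L): `A ⊆ B ↔ A^{+-} ⊆ B^{+-}`. -/
theorem stmt12 {L : Type u} [Lattice L] (Y : Set L) (hY : IsSubl Y) :
    (∀ A : Set L, IsLCutIn Y A → IsLCut (lowerBounds (upperBounds A))) ∧
    (∀ A B : Set L, IsLCutIn Y A → IsLCutIn Y B →
      (A ⊆ B ↔ lowerBounds (upperBounds A) ⊆ lowerBounds (upperBounds B))) := by
  have key : ∀ A : Set L, upperBounds (lowerBounds (upperBounds A)) = upperBounds A := by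
    intro A
    apply Set.Subset.antisymm
    · exact upperBounds_mono_set (subset_lowerBounds_upperBounds A)
    · intro u hu z hz
      exact hz hu
  constructor
  · intro A _
    unfold IsLCut
    rw [key]
  · intro A B hA hB
    constructor
    · intro h x hx y hy
      exact hx (fun z hz => hy (h hz))
    · intro h a ha
      have h1 : a ∈ lowerBounds (upperBounds B) :=
        h (subset_lowerBounds_upperBounds A ha)
      rw [← hB.2]
      exact ⟨fun y hy => h1 hy.1, hA.1 ha⟩
end

section
/- Let L be a lattice, Y ⊆ L a sublattice, and {A_α : α ∈ 𝒜} a family of subsets of Y each satisfying A_α^{+_Y −_Y} = A_α. (i) If Y has Property (A), then ⋂_α (A_α^{+-}) = (⋂_α A_α)^{+-}. (ii) If Y has Property (B), then (⋃_α A_α)^{+_Y −_Y +-} = (⋃_α A_α^{+-})^{+-}. -/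
universe u v w

/-- For a family of subsets `A_α ⊆ Y` with `A_α^{+_Y -_Y} = A_α`:
(i) Property (A) gives `⋂ (A_α)^{+-} = (⋂ A_α)^{+-}`;
(ii) Property (B) gives `(⋃ A_α)^{+_Y -_Y +-} = (⋃ (A_α)^{+-})^{+-}`. -/
theorem stmt15 {L : Type u} [Lattice L] (Y : Set L) (hY : IsSubl Y)
    {ι : Type v} [Nonempty ι] (A : ι → Set L)
    (hsub : ∀ α, A α ⊆ Y) (hcut : ∀ α, lbIn Y (ubIn Y (A α)) = A α) :
    (PropertyA Y →
      (⋂ α, lowerBounds (upperBounds (A α))) = lowerBounds (upperBounds (⋂ α, A α))) ∧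
    (PropertyB Y →
      lowerBounds (upperBounds (lbIn Y (ubIn Y (⋃ α, A α)))) =
        lowerBounds (upperBounds (⋃ α, lowerBounds (upperBounds (A α))))) := by
  constructor
  · intro hA
    apply Set.Subset.antisymm
    · intro x hx
      set U : Set L := ⋃ α, ubIn Y (A α) with hU
      have hUY : U ⊆ Y := by
        intro u hu
        obtain ⟨α, hu⟩ := Set.mem_iUnion.1 hu
        exact hu.2
      have hxU : x ∈ lowerBounds U := by
        intro u hu
        obtain ⟨α, hu⟩ := Set.mem_iUnion.1 hu
        exact (Set.mem_iInter.1 hx α) (fun a ha => hu.1 ha)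
      obtain ⟨y, ⟨hy1, hy2⟩, hxy⟩ := hA U hUY x hxU
      have hyB : y ∈ ⋂ α, A α := by
        rw [Set.mem_iInter]
        intro α
        rw [← hcut α]
        exact ⟨fun z hz => hy1 (Set.mem_iUnion.2 ⟨α, hz⟩), hy2⟩
      intro u hu
      exact le_trans hxy (hu hyB)
    · intro x hx
      rw [Set.mem_iInter]
      intro α u hu
      exact hx (fun b hb => hu (Set.mem_iInter.1 hb α))
  · intro hB
    have hSY : (⋃ α, A α) ⊆ Y := by
      intro a ha
      obtain ⟨α, h⟩ := Set.mem_iUnion.1 ha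
      exact hsub α h
    have hub : upperBounds (lbIn Y (ubIn Y (⋃ α, A α))) = upperBounds (⋃ α, A α) := by
      apply Set.Subset.antisymm
      · intro u hu a ha
        exact hu ⟨fun z hz => hz.1 ha, hSY ha⟩
      · intro u hu c hc
        obtain ⟨y, ⟨hy1, hy2⟩, hyu⟩ := hB (⋃ α, A α) hSY u hu
        exact le_trans (hc.1 ⟨hy1, hy2⟩) hyu
    have hub2 : upperBounds (⋃ α, lowerBounds (upperBounds (A α))) =
        upperBounds (⋃ α, A α) := by
      apply Set.Subset.antisymm
      · intro u hu a ha
        obtain ⟨α, h⟩ := Set.mem_iUnion.1 ha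
        exact hu (Set.mem_iUnion.2 ⟨α, fun v hv => hv h⟩)
      · intro u hu b hb
        obtain ⟨α, h⟩ := Set.mem_iUnion.1 hb
        exact h (fun a ha => hu (Set.mem_iUnion.2 ⟨α, ha⟩))
    rw [hub, hub2]
end

section
/- Let L be a lattice, Y ⊆ L a sublattice, and let i : DM(Y) → DM(L), A ↦ A^{+-} (bounds taken in L), be the canonical order-embedding of Dedekind–MacNeille completions. (i) If Y satisfies Property (A), then i preserves arbitrary meets: for every family {A_α} ⊆ DM(Y), i(⋀^{DM(Y)}_α A_α) = ⋀^{DM(L)}_α i(A_α). (ii) If Y satisfies Property (B), then i preserves arbitrary joins: i(⋁^{DM(Y)}_α A_α) = ⋁^{DM(L)}_α i(A_α). -/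
universe u v w

/-- The canonical order-embedding `i : DM(Y) → DM(L)`, `A ↦ A^{+-}`, preserves arbitrary
meets if `Y` satisfies Property (A), and arbitrary joins if `Y` satisfies Property (B).
Here, for a family of lower cuts `A_α` of `Y`, the meet in DM(Y) (resp. DM(L)) is the
intersection, the join in DM(Y) is `(⋃ A_α)^{+_Y -_Y}`, and the join in DM(L) of the
images is `(⋃ (A_α)^{+-})^{+-}`. -/
theorem stmt16 {L : Type u} [Lattice L] (Y : Set L) (hY : IsSubl Y)
    {ι : Type v} [Nonempty ι] (A : ι → Set L) (hcut : ∀ α, IsLCutIn Y (A α)) :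
    (PropertyA Y →
      lowerBounds (upperBounds (⋂ α, A α)) =
        ⋂ α, lowerBounds (upperBounds (A α))) ∧
    (PropertyB Y →
      lowerBounds (upperBounds (lbIn Y (ubIn Y (⋃ α, A α)))) =
        lowerBounds (upperBounds (⋃ α, lowerBounds (upperBounds (A α))))) := by

  constructor
  · -- Property A ⇒ meets preserved
    intro hA
    apply Set.Subset.antisymm
    · intro x hx
      simp only [Set.mem_iInter]
      intro α
      exact lowerBounds_mono_set (upperBounds_mono_set (Set.iInter_subset A α)) hx
    · intro x hx u hu
      simp only [Set.mem_iInter] at hx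
      -- S : union of upper bounds in Y of the A α
      set S : Set L := ⋃ α, ubIn Y (A α) with hS
      have hSY : S ⊆ Y := by
        intro s hs
        obtain ⟨α, hs⟩ := Set.mem_iUnion.1 hs
        exact hs.2
      have hxS : x ∈ lowerBounds S := by
        intro s hs
        obtain ⟨α, hs⟩ := Set.mem_iUnion.1 hs
        exact hx α hs.1
      obtain ⟨y, ⟨hyl, hyY⟩, hxy⟩ := hA S hSY x hxS
      have hyA : y ∈ ⋂ α, A α := by
        refine Set.mem_iInter.2 fun α => ?_
        rw [← (hcut α).2]
        exact ⟨fun s hs => hyl (Set.mem_iUnion.2 ⟨α, hs⟩), hyY⟩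
      exact le_trans hxy (hu hyA)
  · -- Property B ⇒ joins preserved
    intro hB
    have hUY : (⋃ α, A α) ⊆ Y := by
      intro a ha
      obtain ⟨α, ha⟩ := Set.mem_iUnion.1 ha
      exact (hcut α).1 ha
    have h2 : upperBounds (lbIn Y (ubIn Y (⋃ α, A α))) = upperBounds (⋃ α, A α) := by
      apply Set.Subset.antisymm
      · apply upperBounds_mono_set
        intro a ha
        exact ⟨fun s hs => hs.1 ha, hUY ha⟩
      · intro u hu z hz
        obtain ⟨y, ⟨hyu, hyY⟩, hyu'⟩ := hB _ hUY u hu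
        exact le_trans (hz.1 ⟨hyu, hyY⟩) hyu'
    have h1 : upperBounds (⋃ α, lowerBounds (upperBounds (A α))) = upperBounds (⋃ α, A α) := by
      apply Set.Subset.antisymm
      · apply upperBounds_mono_set
        exact Set.iUnion_mono fun α => subset_lowerBounds_upperBounds (A α)
      · intro u hu z hz
        obtain ⟨α, hz⟩ := Set.mem_iUnion.1 hz
        exact hz fun a ha => hu (Set.mem_iUnion.2 ⟨α, ha⟩)
    rw [h2, ← h1]
end

section
/- Let L be a complete lattice and Y a sublattice of L. Then Y is O-closed if and only if Y is closed under arbitrary suprema and infima, i.e. for every nonempty A ⊆ Y, the supremum of A in L belongs to Y and the infimum of A in L belongs to Y. -/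
universe u v w

/-- In a complete lattice, a sublattice is O-closed iff it is closed under arbitrary
(nonempty) suprema and infima. -/
theorem stmt17 {L : Type u} [CompleteLattice L] (Y : Set L) (hY : IsSubl Y) :
    OClosedSet Y ↔ ∀ A ⊆ Y, A.Nonempty → sSup A ∈ Y ∧ sInf A ∈ Y := by
  classical
  constructor
  · intro hclosed A hA hAne
    have hcl : OAdh1 Y = Y := hclosed
    obtain ⟨a0, ha0⟩ := hAne
    constructor
    · -- sSup A ∈ Y
      rw [← hcl]
      set Γ : Type u := {F : Finset L // F.Nonempty ∧ ↑F ⊆ A} with hΓ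
      set f : Γ → L := fun F => F.1.sup' F.2.1 id with hf
      have hmono : ∀ F G : Γ, F ≤ G → f F ≤ f G := fun F G h =>
        Finset.sup'_mono id h F.2.1
      have hle : ∀ F : Γ, f F ≤ sSup A := fun F =>
        Finset.sup'_le _ _ fun a ha => le_sSup (F.2.2 ha)
      have hunion : ∀ F G : Γ, ∃ H : Γ, F ≤ H ∧ G ≤ H := by
        intro F G
        refine ⟨⟨F.1 ∪ G.1, F.2.1.mono Finset.subset_union_left, ?_⟩,
          Finset.subset_union_left, Finset.subset_union_right⟩
        intro x hx
        rcases Finset.mem_union.mp hx with h | h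
        · exact F.2.2 h
        · exact G.2.2 h
      refine ⟨Γ, inferInstance, ⟨fun F G => (hunion F G).imp fun H h => h⟩,
        ⟨⟨{a0}, Finset.singleton_nonempty a0, by simpa using ha0⟩⟩,
        f, fun F => Finset.sup'_mem Y (fun x hx y hy => (hY x hx y hy).1) _ _ id
          (fun i hi => hA (F.2.2 hi)),
        Set.range f, {sSup A}, ⟨f ⟨{a0}, Finset.singleton_nonempty a0, by simpa using ha0⟩,
          Set.mem_range_self _⟩, ?_, ⟨sSup A, rfl⟩, ?_, ?_, isGLB_singleton, ?_⟩
      · rintro _ ⟨F, rfl⟩ _ ⟨G, rfl⟩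
        obtain ⟨H, hFH, hGH⟩ := hunion F G
        exact ⟨f H, Set.mem_range_self _, hmono F H hFH, hmono G H hGH⟩
      · intro y hy z hz
        exact ⟨sSup A, rfl, (Set.mem_singleton_iff.mp hy).ge, (Set.mem_singleton_iff.mp hz).ge⟩
      · constructor
        · rintro _ ⟨F, rfl⟩
          exact hle F
        · intro b hb
          refine sSup_le fun a ha => ?_
          have := hb (Set.mem_range_self (⟨{a}, Finset.singleton_nonempty a, by simpa using ha⟩ : Γ))
          simpa [hf] using this
      · rintro m ⟨F, rfl⟩ n hn
        rcases Set.mem_singleton_iff.mp hn with rfl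
        exact ⟨F, fun G hG => ⟨hmono F G hG, hle G⟩⟩
    · -- sInf A ∈ Y
      rw [← hcl]
      set Γ : Type u := {F : Finset L // F.Nonempty ∧ ↑F ⊆ A} with hΓ
      set f : Γ → L := fun F => F.1.inf' F.2.1 id with hf
      have hmono : ∀ F G : Γ, F ≤ G → f G ≤ f F := fun F G h =>
        Finset.inf'_mono id h F.2.1
      have hle : ∀ F : Γ, sInf A ≤ f F := fun F =>
        Finset.le_inf' _ _ fun a ha => sInf_le (F.2.2 ha)
      have hunion : ∀ F G : Γ, ∃ H : Γ, F ≤ H ∧ G ≤ H := by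
        intro F G
        refine ⟨⟨F.1 ∪ G.1, F.2.1.mono Finset.subset_union_left, ?_⟩,
          Finset.subset_union_left, Finset.subset_union_right⟩
        intro x hx
        rcases Finset.mem_union.mp hx with h | h
        · exact F.2.2 h
        · exact G.2.2 h
      refine ⟨Γ, inferInstance, ⟨fun F G => (hunion F G).imp fun H h => h⟩,
        ⟨⟨{a0}, Finset.singleton_nonempty a0, by simpa using ha0⟩⟩,
        f, fun F => Finset.inf'_mem Y (fun x hx y hy => (hY x hx y hy).2) _ _ id
          (fun i hi => hA (F.2.2 hi)),
        {sInf A}, Set.range f, ⟨sInf A, rfl⟩, ?_,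
        ⟨f ⟨{a0}, Finset.singleton_nonempty a0, by simpa using ha0⟩, Set.mem_range_self _⟩,
        ?_, isLUB_singleton, ?_, ?_⟩
      · intro y hy z hz
        exact ⟨sInf A, rfl, (Set.mem_singleton_iff.mp hy).le, (Set.mem_singleton_iff.mp hz).le⟩
      · rintro _ ⟨F, rfl⟩ _ ⟨G, rfl⟩
        obtain ⟨H, hFH, hGH⟩ := hunion F G
        exact ⟨f H, Set.mem_range_self _, hmono F H hFH, hmono G H hGH⟩
      · constructor
        · rintro _ ⟨F, rfl⟩
          exact hle F
        · intro b hb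
          refine le_sInf fun a ha => ?_
          have := hb (Set.mem_range_self (⟨{a}, Finset.singleton_nonempty a, by simpa using ha⟩ : Γ))
          simpa [hf] using this
      · rintro m hm n ⟨F, rfl⟩
        rcases Set.mem_singleton_iff.mp hm with rfl
        exact ⟨F, fun G hG => ⟨hle G, hmono F G hG⟩⟩
  · intro hcl
    show OAdh1 Y = Y
    apply Set.Subset.antisymm
    · rintro x ⟨Γ, _, hdir, hne, f, hf, M, N, hMne, hMdir, hNne, hNdir, hlub, hglb, hev⟩
      choose g hg using hev
      obtain ⟨n0, hn0⟩ := hNne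
      set S : ∀ m, m ∈ M → Set L :=
        fun m hm => f '' {γ | ∃ n, ∃ hn : n ∈ N, g m hm n hn ≤ γ} with hS
      have hSY : ∀ m hm, S m hm ⊆ Y := by
        rintro m hm _ ⟨γ, _, rfl⟩; exact hf γ
      have hSne : ∀ m hm, (S m hm).Nonempty := fun m hm =>
        ⟨f (g m hm n0 hn0), ⟨g m hm n0 hn0, ⟨n0, hn0, le_refl _⟩, rfl⟩⟩
      have h1 : ∀ m hm, m ≤ sInf (S m hm) := by
        intro m hm
        refine le_sInf ?_
        rintro _ ⟨γ, ⟨n, hn, hγ⟩, rfl⟩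
        exact (hg m hm n hn γ hγ).1
      have h2 : ∀ m hm, sInf (S m hm) ≤ x := by
        intro m hm
        refine hglb.2 fun n hn => ?_
        exact sInf_le_of_le ⟨g m hm n hn, ⟨n, hn, le_refl _⟩, rfl⟩
          (hg m hm n hn (g m hm n hn) (le_refl _)).2
      set D : Set L := {d | ∃ m, ∃ hm : m ∈ M, d = sInf (S m hm)} with hD
      have hDY : D ⊆ Y := by
        rintro _ ⟨m, hm, rfl⟩
        exact (hcl (S m hm) (hSY m hm) (hSne m hm)).2
      obtain ⟨m1, hm1⟩ := hMne
      have hDne : D.Nonempty := ⟨sInf (S m1 hm1), m1, hm1, rfl⟩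
      have hx : IsLUB D x := by
        constructor
        · rintro _ ⟨m, hm, rfl⟩
          exact h2 m hm
        · intro b hb
          exact hlub.2 fun m hm => le_trans (h1 m hm) (hb ⟨m, hm, rfl⟩)
      have hxeq : sSup D = x := hx.sSup_eq
      rw [← hxeq]
      exact (hcl D hDY hDne).1
    · intro x hx
      refine ⟨PUnit.{u+1}, inferInstance, ⟨fun a b => ⟨a, le_refl _, le_refl _⟩⟩,
        ⟨PUnit.unit⟩, fun _ => x, fun _ => hx, {x}, {x}, ⟨x, rfl⟩, ?_, ⟨x, rfl⟩, ?_,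
        isLUB_singleton, isGLB_singleton, ?_⟩
      · intro y hy z hz
        exact ⟨x, rfl, (Set.mem_singleton_iff.mp hy).le, (Set.mem_singleton_iff.mp hz).le⟩
      · intro y hy z hz
        exact ⟨x, rfl, (Set.mem_singleton_iff.mp hy).ge, (Set.mem_singleton_iff.mp hz).ge⟩
      · rintro m hm n hn
        rcases Set.mem_singleton_iff.mp hm with rfl
        rcases Set.mem_singleton_iff.mp hn with rfl
        exact ⟨PUnit.unit, fun γ _ => ⟨le_refl _, le_refl _⟩⟩
end

section
/- Let L be a complete lattice and Y a complete regular sublattice of L, i.e. a sublattice in which every nonempty subset has a supremum and an infimum in Y, and these coincide with the supremum and infimum taken in L. Then Y is O-closed. -/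
universe u v w

/-- In a complete lattice, a complete regular sublattice (every nonempty subset has a
supremum and infimum belonging to `Y` which is also its supremum/infimum in `L`)
is O-closed. -/
theorem stmt18 {L : Type u} [CompleteLattice L] (Y : Set L) (hY : IsSubl Y)
    (hsup : ∀ A ⊆ Y, A.Nonempty → ∃ b ∈ Y, IsLUB A b)
    (hinf : ∀ A ⊆ Y, A.Nonempty → ∃ b ∈ Y, IsGLB A b) :
    OClosedSet Y := by
  apply Set.eq_of_subset_of_subset
  · rintro x ⟨Γ, hpre, hdir, hne, f, hfY, M, N, hMne, hMdir, hNne, hNdir, hlub, hglb, hev⟩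
    -- liminf argument: g γ = inf of tail of f, then x = sup of g's, all in Y
    have hA : ∀ γ : Γ, ∃ b ∈ Y, IsGLB (f '' {δ | γ ≤ δ}) b := by
      intro γ
      apply hinf
      · rintro _ ⟨δ, _, rfl⟩; exact hfY δ
      · exact ⟨f γ, γ, le_refl γ, rfl⟩
    choose g hgY hgGLB using hA
    obtain ⟨z, hzY, hzLUB⟩ := hsup (Set.range g) (by rintro _ ⟨γ, rfl⟩; exact hgY γ)
      (⟨g hne.some, hne.some, rfl⟩)
    obtain ⟨m0, hm0⟩ := hMne
    obtain ⟨n0, hn0⟩ := hNne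
    have hzx : z ≤ x := by
      apply hzLUB.2
      rintro _ ⟨γ, rfl⟩
      apply hglb.2
      intro n hn
      obtain ⟨γ₀, hγ₀⟩ := hev m0 hm0 n hn
      obtain ⟨δ, hδ1, hδ2⟩ := hdir.directed γ γ₀
      exact le_trans ((hgGLB γ).1 ⟨δ, hδ1, rfl⟩) (hγ₀ δ hδ2).2
    have hxz : x ≤ z := by
      apply hlub.2
      intro m hm
      obtain ⟨γ₀, hγ₀⟩ := hev m hm n0 hn0
      refine le_trans ?_ (hzLUB.1 ⟨γ₀, rfl⟩)
      apply (hgGLB γ₀).2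
      rintro _ ⟨δ, hδ, rfl⟩
      exact (hγ₀ δ hδ).1
    have : x = z := le_antisymm hxz hzx
    rw [this]; exact hzY
  · intro x hx
    refine ⟨PUnit.{u+1}, inferInstance, inferInstance, ⟨PUnit.unit⟩,
      fun _ => x, fun _ => hx, {x}, {x}, ⟨x, rfl⟩, directedOn_singleton x,
      ⟨x, rfl⟩, fun a ha b hb => ⟨x, rfl, by simp_all, by simp_all⟩, isLUB_singleton,
      isGLB_singleton, ?_⟩
    intro m hm n hn
    rw [Set.mem_singleton_iff] at hm hn
    subst hm; subst hn
    exact ⟨PUnit.unit, fun γ _ => ⟨le_rfl, le_rfl⟩⟩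
end
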